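/- arXiv:1107.2900 — 10 statements merged into one kernel-verified Lean document; each statement's English description precedes it below -/
import Mathlib

section
/- Assume each φ_i is continuous. Let τ̂ ∈ ℝ^N satisfy τ̂_d ≤ 0 and τ̂_i ≤ φ_i((λ_a + τ̂_{j_a})_{a∈A}) for every i ≠ d, and let τ⁰ ∈ ℝ^N satisfy τ⁰_d = 0, τ⁰ ≥ τ̂, and τ⁰_i ≥ φ_i((λ_a + τ⁰_{j_a})_{a∈A}) for every i ≠ d. Then the iterates τ^{n+1}_i = φ_i((λ_a + τ^n_{j_a})_{a∈A}) for i ≠ d, τ^{n+1}_d = 0, are non-increasing, satisfy τ̂ ≤ τ^n ≤ τ⁰ for all n, and converge as n → ∞ to a vector τ with τ_d = 0, τ_i = φ_i((λ_a + τ_{j_a})_{a∈A}) for all i ≠ d, and τ̂_i ≤ τ_i ≤ τ⁰_i for all i. -/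
/-!
The right-hand side of the dynamic programming equations is a monotone, continuous self-map `F`
of `N → ℝ`, and the iterates are `τⁿ⁺¹ = F τⁿ`. Since `F τ⁰ ≤ τ⁰`, monotonicity makes the iterates
non-increasing, and since `τ̂ ≤ F τ̂` it keeps them above `τ̂`. A non-increasing sequence bounded
below converges to its infimum, and by continuity the limit is a fixed point of `F`.
-/

open Filter Topology Function

section MonotoneIteration

variable {α : Type*}

theorem Monotone.antitone_of_succ_eq [Preorder α] {F : α → α} (hF : Monotone F) {T : ℕ → α}
    (hstep : ∀ n, T (n + 1) = F (T n)) (h₀ : T 1 ≤ T 0) : Antitone T :=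
  antitone_nat_of_succ_le fun n =>
    hF.seq_le_seq (x := fun k => T (k + 1)) (y := T) n h₀
      (fun k _ => (hstep (k + 1)).le) (fun k _ => (hstep k).ge)

theorem Monotone.le_seq_of_le_map [Preorder α] {F : α → α} (hF : Monotone F) {T : ℕ → α}
    (hstep : ∀ n, T (n + 1) = F (T n)) {y : α} (hy : y ≤ F y) (hy₀ : y ≤ T 0) (n : ℕ) :
    y ≤ T n :=
  hF.seq_le_seq (x := fun _ => y) n hy₀ (fun _ _ => hy) (fun k _ => (hstep k).ge)

theorem isFixedPt_of_tendsto_of_succ_eq [TopologicalSpace α] [T2Space α] {F : α → α}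
    {T : ℕ → α} {x : α} (hT : Tendsto T atTop (𝓝 x)) (hstep : ∀ n, T (n + 1) = F (T n))
    (hF : ContinuousAt F x) : IsFixedPt F x :=
  tendsto_nhds_unique ((hF.tendsto.comp hT).congr fun n => (hstep n).symm)
    (hT.comp (tendsto_add_atTop_nat 1))

theorem Monotone.exists_isFixedPt_of_succ_eq [ConditionallyCompleteLattice α] [TopologicalSpace α]
    [InfConvergenceClass α] [T2Space α] {F : α → α} (hF : Monotone F) (hFc : Continuous F)
    {T : ℕ → α} (hstep : ∀ n, T (n + 1) = F (T n)) (hsup : F (T 0) ≤ T 0) {y : α}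
    (hy : y ≤ F y) (hy₀ : y ≤ T 0) :
    Antitone T ∧ (∀ n, y ≤ T n) ∧
      ∃ x, Tendsto T atTop (𝓝 x) ∧ IsFixedPt F x ∧ y ≤ x ∧ x ≤ T 0 := by
  have hanti : Antitone T := hF.antitone_of_succ_eq hstep (hstep 0 ▸ hsup)
  have hlow : ∀ n, y ≤ T n := hF.le_seq_of_le_map hstep hy hy₀
  have hbdd : BddBelow (Set.range T) := ⟨y, Set.forall_mem_range.2 hlow⟩
  have hlim : Tendsto T atTop (𝓝 (⨅ n, T n)) := tendsto_atTop_ciInf hanti hbdd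
  exact ⟨hanti, hlow, ⨅ n, T n, hlim, isFixedPt_of_tendsto_of_succ_eq hlim hstep hFc.continuousAt,
    le_ciInf hlow, ciInf_le hbdd 0⟩

end MonotoneIteration

section DynamicProgramming

variable {N A : Type*} [DecidableEq N]

def dpOperator (head : A → N) (d : N) (lam : A → ℝ) (phi : N → (A → ℝ) → ℝ) (τ : N → ℝ) :
    N → ℝ :=
  fun i => if i = d then 0 else phi i (fun a => lam a + τ (head a))

variable {head : A → N} {d : N} {lam : A → ℝ} {phi : N → (A → ℝ) → ℝ}

theorem dpOperator_monotone
    (hmono : ∀ i, i ≠ d → ∀ z z' : A → ℝ, (∀ a, z a ≤ z' a) → phi i z ≤ phi i z') :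
    Monotone (dpOperator head d lam phi) := by
  intro τ τ' hτ i
  by_cases hi : i = d
  · simp [dpOperator, hi]
  · simp only [dpOperator, hi, if_false]
    exact hmono i hi _ _ fun a => add_le_add le_rfl (hτ (head a))

theorem continuous_dpOperator (hcont : ∀ i, i ≠ d → Continuous (phi i)) :
    Continuous (dpOperator head d lam phi) := by
  refine continuous_pi fun i => ?_
  by_cases hi : i = d
  · simpa [dpOperator, hi] using continuous_const
  · simp only [dpOperator, hi, if_false]
    exact (hcont i hi).comp (continuous_pi fun a => continuous_const.add (continuous_apply (head a)))

end DynamicProgramming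

theorem stmt2_general {N A : Type}
    (head : A → N) (d : N) (lam : A → ℝ)
    (phi : N → (A → ℝ) → ℝ)
    (hcont : ∀ i, i ≠ d → Continuous (phi i))
    (hmono : ∀ i, i ≠ d → ∀ z z' : A → ℝ, (∀ a, z a ≤ z' a) → phi i z ≤ phi i z')
    (τhat : N → ℝ)
    (hhatd : τhat d ≤ 0)
    (hsub : ∀ i, i ≠ d → τhat i ≤ phi i (fun a => lam a + τhat (head a)))
    (τ0 : N → ℝ)
    (hτ0d : τ0 d = 0)
    (hle : ∀ i, τhat i ≤ τ0 i)
    (hsup : ∀ i, i ≠ d → phi i (fun a => lam a + τ0 (head a)) ≤ τ0 i)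
    (T : ℕ → N → ℝ)
    (hT0 : T 0 = τ0)
    (hTd : ∀ n, T (n + 1) d = 0)
    (hTs : ∀ n i, i ≠ d → T (n + 1) i = phi i (fun a => lam a + T n (head a))) :
    (∀ n i, T (n + 1) i ≤ T n i) ∧
    (∀ n i, τhat i ≤ T n i ∧ T n i ≤ τ0 i) ∧
    ∃ τ : N → ℝ,
      (∀ i, Filter.Tendsto (fun n => T n i) Filter.atTop (nhds (τ i))) ∧
      τ d = 0 ∧
      (∀ i, i ≠ d → τ i = phi i (fun a => lam a + τ (head a))) ∧
      (∀ i, τhat i ≤ τ i ∧ τ i ≤ τ0 i) := by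
  classical
  set F := dpOperator head d lam phi
  have hstep : ∀ n, T (n + 1) = F (T n) := fun n => funext fun i => by
    by_cases hi : i = d
    · simp [F, dpOperator, hi, hTd]
    · simp [F, dpOperator, hi, hTs n i hi]
  have hsuper : F (T 0) ≤ T 0 := fun i => by
    by_cases hi : i = d <;> simp [F, dpOperator, hi, hT0, hτ0d, hsup]
  have hsubsol : τhat ≤ F τhat := fun i => by
    by_cases hi : i = d <;> simp [F, dpOperator, hi, hhatd, hsub]
  obtain ⟨hanti, hlow, τ, hlim, hfix, hτlow, hτup⟩ :=
    (dpOperator_monotone hmono).exists_isFixedPt_of_succ_eq (continuous_dpOperator hcont) hstep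
      hsuper hsubsol (hT0 ▸ hle)
  rw [hT0] at hτup
  refine ⟨fun n => hanti n.le_succ, fun n i => ⟨hlow n i, hT0 ▸ hanti n.zero_le i⟩, τ,
    tendsto_pi_nhds.1 hlim, ?_, fun i hi => ?_, fun i => ⟨hτlow i, hτup i⟩⟩
  · simpa [F, dpOperator] using (congrFun hfix d).symm
  · simpa [F, dpOperator, hi] using (congrFun hfix i).symm

/-- with continuous `φ_i`, given a subsolution `τ̂` (with `τ̂_d ≤ 0`)
and a supersolution `τ⁰` (with `τ⁰_d = 0`, `τ⁰ ≥ τ̂`), the iterates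
`τ^{n+1}_i = φ_i((λ_a + τ^n_{j_a})_a)`, `τ^{n+1}_d = 0`, started at `τ⁰`,
are non-increasing, stay in `[τ̂, τ⁰]`, and converge to a fixed point `τ` of the
dynamic programming equations with `τ̂ ≤ τ ≤ τ⁰`. -/
theorem stmt2 {N A : Type} [Fintype N] [Fintype A]
    (tail head : A → N) (d : N) (lam : A → ℝ)
    (phi : N → (A → ℝ) → ℝ)
    (hout : ∀ i, i ≠ d → ∃ a, tail a = i)
    (hcont : ∀ i, i ≠ d → Continuous (phi i))
    (hdep : ∀ i, i ≠ d → ∀ z z' : A → ℝ, (∀ a, tail a = i → z a = z' a) →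
      phi i z = phi i z')
    (hmono : ∀ i, i ≠ d → ∀ z z' : A → ℝ, (∀ a, z a ≤ z' a) → phi i z ≤ phi i z')
    (hmin : ∀ i, i ≠ d → ∀ z : A → ℝ, ∀ a, tail a = i → phi i z ≤ z a)
    (τhat : N → ℝ)
    (hhatd : τhat d ≤ 0)
    (hsub : ∀ i, i ≠ d → τhat i ≤ phi i (fun a => lam a + τhat (head a)))
    (τ0 : N → ℝ)
    (hτ0d : τ0 d = 0)
    (hle : ∀ i, τhat i ≤ τ0 i)
    (hsup : ∀ i, i ≠ d → phi i (fun a => lam a + τ0 (head a)) ≤ τ0 i)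
    (T : ℕ → N → ℝ)
    (hT0 : T 0 = τ0)
    (hTd : ∀ n, T (n + 1) d = 0)
    (hTs : ∀ n i, i ≠ d → T (n + 1) i = phi i (fun a => lam a + T n (head a))) :
    (∀ n i, T (n + 1) i ≤ T n i) ∧
    (∀ n i, τhat i ≤ T n i ∧ T n i ≤ τ0 i) ∧
    ∃ τ : N → ℝ,
      (∀ i, Filter.Tendsto (fun n => T n i) Filter.atTop (nhds (τ i))) ∧
      τ d = 0 ∧
      (∀ i, i ≠ d → τ i = phi i (fun a => lam a + τ (head a))) ∧
      (∀ i, τhat i ≤ τ i ∧ τ i ≤ τ0 i) :=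
  stmt2_general head d lam phi hcont hmono τhat hhatd hsub τ0 hτ0d hle hsup T hT0 hTd hTs
end

section
/- Let τ̂ ∈ ℝ^N satisfy τ̂_i < φ_i((λ_a + τ̂_{j_a})_{a∈A}) for every node i ≠ d, and let (τ, z) solve the dynamic programming system at λ. Then for each node i ≠ d there exists a node j with P_{ij}(z) > 0 and τ̂_j − τ_j > τ̂_i − τ_i. -/
/-!
By concavity, `φ_i` lies below its tangent plane at `z`; evaluated at `ẑ_a = λ_a + τ̂_{j_a}` and
combined with `τ_i = φ_i(z)` and `τ̂_i < φ_i(ẑ)`, this gives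
`τ̂_i - τ_i < Σ_a ∂_aφ_i(z) (τ̂_{j_a} - τ_{j_a})`. The right side is an average with weights
`∂_aφ_i(z)`, so some arc `a` of positive weight has `τ̂_{j_a} - τ_{j_a} > τ̂_i - τ_i`, and its head
`j = j_a` is the node sought, as `P_{ij}(z) ≥ ∂_aφ_i(z) > 0`.
-/

theorem ConcaveOn.le_add_of_hasFDerivAt {E : Type*} [NormedAddCommGroup E] [NormedSpace ℝ E]
    {S : Set E} {f : E → ℝ} {f' : E →L[ℝ] ℝ} {x y : E}
    (hf : ConcaveOn ℝ S f) (hx : x ∈ S) (hy : y ∈ S) (hd : HasFDerivAt f f' x) :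
    f y ≤ f x + f' (y - x) := by
  let ℓ : ℝ →ᵃ[ℝ] E := AffineMap.lineMap x y
  have hℓ : HasDerivAt ℓ (y - x) 0 := by
    simpa using AffineMap.hasDerivAt_lineMap (a := x) (b := y) (x := (0 : ℝ))
  have hd' : HasFDerivAt f f' (ℓ 0) := by simpa [ℓ] using hd
  have hslope := (hf.comp_affineMap ℓ).slope_le_of_hasDerivAt (x := 0) (y := 1)
    (by simpa [ℓ] using hx) (by simpa [ℓ] using hy) one_pos (hd'.comp_hasDerivAt 0 hℓ)
  simp only [slope, ℓ, AffineMap.lineMap_apply_zero, AffineMap.lineMap_apply_one,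
    Function.comp_apply, sub_zero, inv_one, vsub_eq_sub, smul_eq_mul, one_mul] at hslope
  linarith

theorem Finset.exists_pos_lt_of_lt_sum_mul {ι : Type*} {s : Finset ι} {w x : ι → ℝ} {c : ℝ}
    (hw : ∀ a ∈ s, 0 ≤ w a) (hw₁ : ∑ a ∈ s, w a = 1) (h : c < ∑ a ∈ s, w a * x a) :
    ∃ a ∈ s, 0 < w a ∧ c < x a := by
  by_contra! hle
  have hterm : ∀ a ∈ s, w a * x a ≤ w a * c := fun a ha => by
    rcases (hw a ha).eq_or_lt with h0 | hpos
    · simp [← h0]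
    · exact mul_le_mul_of_nonneg_left (hle a ha hpos) hpos.le
  have := Finset.sum_le_sum hterm
  rw [← Finset.sum_mul, hw₁, one_mul] at this
  linarith

theorem stmt4_general {N A : Type} [Fintype A] [DecidableEq N]
    (tail head : A → N) (d : N) (lam : A → ℝ)
    (phi : N → (A → ℝ) → ℝ) (Dphi : N → (A → ℝ) → A → ℝ)
    (hconc : ∀ i, i ≠ d → ConcaveOn ℝ Set.univ (phi i))
    (hderiv : ∀ i, i ≠ d → ∀ z : A → ℝ,
      HasFDerivAt (phi i)
        (∑ a, Dphi i z a • (ContinuousLinearMap.proj a : (A → ℝ) →L[ℝ] ℝ)) z)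
    (hDnn : ∀ i, i ≠ d → ∀ z a, 0 ≤ Dphi i z a)
    (hDzero : ∀ i, i ≠ d → ∀ (z : A → ℝ) a, tail a ≠ i → Dphi i z a = 0)
    (hDsum : ∀ i, i ≠ d → ∀ z : A → ℝ,
      ∑ a ∈ Finset.univ.filter (fun a => tail a = i), Dphi i z a = 1)
    (τhat : N → ℝ)
    (hsub : ∀ i, i ≠ d → τhat i < phi i (fun a => lam a + τhat (head a)))
    (τ : N → ℝ) (z : A → ℝ)
    (hz : ∀ a, z a = lam a + τ (head a))
    (hτ : ∀ i, i ≠ d → τ i = phi i z) :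
    ∀ i, i ≠ d → ∃ j,
      0 < ∑ a ∈ Finset.univ.filter (fun a => tail a = i ∧ head a = j), Dphi i z a ∧
      τhat i - τ i < τhat j - τ j := by
  intro i hi
  set zhat : A → ℝ := fun a => lam a + τhat (head a)
  have htangent : τhat i - τ i < ∑ a, Dphi i z a * (τhat (head a) - τ (head a)) := by
    have hle := (hconc i hi).le_add_of_hasFDerivAt (Set.mem_univ z) (Set.mem_univ zhat)
      (hderiv i hi z)
    simp only [_root_.sum_apply, _root_.smul_apply, ContinuousLinearMap.proj_apply, Pi.sub_apply,
      smul_eq_mul, zhat, hz, add_sub_add_left_eq_sub] at hle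
    linarith [hsub i hi, hτ i hi]
  have hsum_univ : ∑ a, Dphi i z a = 1 := by
    rw [← hDsum i hi z, Finset.sum_filter_of_ne fun a _ ha => ?_]
    by_contra hta
    exact ha (hDzero i hi z a hta)
  obtain ⟨a, -, hpos, hlt⟩ := Finset.exists_pos_lt_of_lt_sum_mul
    (fun a _ => hDnn i hi z a) hsum_univ htangent
  have hta : tail a = i := by
    by_contra hta
    exact hpos.ne' (hDzero i hi z a hta)
  refine ⟨head a, hpos.trans_le (Finset.single_le_sum (fun b _ => hDnn i hi z b) ?_), hlt⟩
  simp [hta]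

/-- if `τ̂_i < φ_i((λ_a + τ̂_{j_a})_a)` for all `i ≠ d` and `(τ, z)`
solves the dynamic programming system at `λ`, then for each `i ≠ d` there is a
node `j` with transition probability `P_{ij}(z) > 0` and `τ̂_j − τ_j > τ̂_i − τ_i`. -/
theorem stmt4 {N A : Type} [Fintype N] [Fintype A] [DecidableEq N] [DecidableEq A]
    (tail head : A → N) (d : N) (lam : A → ℝ)
    (phi : N → (A → ℝ) → ℝ) (Dphi : N → (A → ℝ) → A → ℝ)
    (hout : ∀ i, i ≠ d → ∃ a, tail a = i)
    (hdep : ∀ i, i ≠ d → ∀ z z' : A → ℝ, (∀ a, tail a = i → z a = z' a) →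
      phi i z = phi i z')
    (hconc : ∀ i, i ≠ d → ConcaveOn ℝ Set.univ (phi i))
    (hderiv : ∀ i, i ≠ d → ∀ z : A → ℝ,
      HasFDerivAt (phi i)
        (∑ a, Dphi i z a • (ContinuousLinearMap.proj a : (A → ℝ) →L[ℝ] ℝ)) z)
    (hmono : ∀ i, i ≠ d → Monotone (phi i))
    (hDnn : ∀ i, i ≠ d → ∀ z a, 0 ≤ Dphi i z a)
    (hDzero : ∀ i, i ≠ d → ∀ (z : A → ℝ) a, tail a ≠ i → Dphi i z a = 0)
    (hDsum : ∀ i, i ≠ d → ∀ z : A → ℝ,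
      ∑ a ∈ Finset.univ.filter (fun a => tail a = i), Dphi i z a = 1)
    (τhat : N → ℝ)
    (hsub : ∀ i, i ≠ d → τhat i < phi i (fun a => lam a + τhat (head a)))
    (τ : N → ℝ) (z : A → ℝ)
    (hτd : τ d = 0) (hz : ∀ a, z a = lam a + τ (head a))
    (hτ : ∀ i, i ≠ d → τ i = phi i z) :
    ∀ i, i ≠ d → ∃ j,
      0 < ∑ a ∈ Finset.univ.filter (fun a => tail a = i ∧ head a = j), Dphi i z a ∧
      τhat i - τ i < τhat j - τ j :=
  stmt4_general tail head d lam phi Dphi hconc hderiv hDnn hDzero hDsum τhat hsub τ z hz hτ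
end

section
/- Let P be a square matrix indexed by a finite set S, with nonnegative entries, and suppose there exists an integer m ≥ 1 such that every row sum of the power P^m is strictly less than 1. Then the matrix I − P is invertible, the series Σ_{k=0}^∞ P^k converges, its sum equals (I − P)^{-1}, and every entry of (I − P)^{-1} is nonnegative. -/
/-!
Under the row-sum (`ℓ∞` operator) norm, a nonnegative matrix whose row sums are `< 1` has norm
`< 1`, so `‖P ^ m‖ < 1`. Splitting `ℕ` into residue classes mod `m` writes `∑ P ^ k` as the
product of the absolutely convergent geometric series in `P ^ m` with the finite sum
`∑_{r < m} P ^ r`, hence it converges; its sum is then a right inverse of `1 - P`, and it is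
entrywise nonnegative as a sum of nonnegative matrices.
-/

theorem summable_pow_of_norm_pow_lt_one {R : Type*} [NormedRing R] [CompleteSpace R] {x : R}
    {m : ℕ} (hm : m ≠ 0) (h : ‖x ^ m‖ < 1) : Summable (x ^ ·) := by
  have : NeZero m := ⟨hm⟩
  have hblock : Summable fun p : ℕ × Fin m => (x ^ m) ^ p.1 * x ^ (p.2 : ℕ) :=
    summable_mul_of_summable_norm (f := ((x ^ m) ^ ·)) (g := fun r : Fin m => x ^ (r : ℕ))
      (summable_norm_geometric_of_norm_lt_one h) .of_finite
  have hsplit : (x ^ ·) ∘ (Nat.divModEquiv m).symm =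
      fun p : ℕ × Fin m => (x ^ m) ^ p.1 * x ^ (p.2 : ℕ) := by
    funext p
    simp only [Function.comp_apply, Nat.divModEquiv_symm_apply, pow_add, pow_mul']
  rw [← (Nat.divModEquiv m).symm.summable_iff, hsplit]
  exact hblock

namespace Matrix

attribute [local instance] Matrix.linftyOpNormedAddCommGroup Matrix.linftyOpNormedRing
  Matrix.linftyOpNormedAlgebra

theorem linfty_opNorm_lt_of_nonneg {m n : Type*} [Fintype m] [Fintype n] {A : Matrix m n ℝ}
    (hA : ∀ i j, 0 ≤ A i j) {r : ℝ} (hr : 0 < r) (hrow : ∀ i, ∑ j, A i j < r) :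
    ‖A‖ < r := by
  lift r to NNReal using hr.le
  rw [linfty_opNorm_def, NNReal.coe_lt_coe, Finset.sup_lt_iff (by exact_mod_cast hr)]
  intro i _
  rw [← NNReal.coe_lt_coe, NNReal.coe_sum]
  simpa only [coe_nnnorm, Real.norm_of_nonneg (hA i _)] using hrow i

theorem summable_pow_of_sum_pow_apply_lt_one {n : Type*} [Fintype n] [DecidableEq n]
    {P : Matrix n n ℝ} (hP : ∀ i j, 0 ≤ P i j) {m : ℕ} (hm : m ≠ 0)
    (hrow : ∀ i, ∑ j, (P ^ m) i j < 1) : Summable (P ^ ·) :=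
  summable_pow_of_norm_pow_lt_one hm
    (linfty_opNorm_lt_of_nonneg (pow_apply_nonneg hP m) one_pos hrow)

end Matrix

/-- a nonnegative square matrix `P` such that some power `P^m`
(`m ≥ 1`) has all row sums `< 1` satisfies: `I − P` is invertible, the series
`Σ_k P^k` converges with sum `(I − P)⁻¹`, and `(I − P)⁻¹` has nonnegative
entries. -/
theorem stmt6 {S : Type} [Fintype S] [DecidableEq S] (P : Matrix S S ℝ)
    (hnn : ∀ i j, 0 ≤ P i j)
    (hm : ∃ m : ℕ, 1 ≤ m ∧ ∀ i, ∑ j, (P ^ m) i j < 1) :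
    IsUnit (1 - P) ∧
    HasSum (fun k : ℕ => P ^ k) (1 - P)⁻¹ ∧
    ∀ i j, 0 ≤ (1 - P)⁻¹ i j := by
  obtain ⟨m, hm1, hrow⟩ := hm
  have hsum : Summable (P ^ ·) :=
    Matrix.summable_pow_of_sum_pow_apply_lt_one hnn (by omega) hrow
  have hright : (1 - P) * ∑' k, P ^ k = 1 := hsum.one_sub_mul_tsum_pow
  have hinv : (1 - P)⁻¹ = ∑' k, P ^ k := Matrix.inv_eq_right_inv hright
  have hhasSum : HasSum (P ^ ·) (1 - P)⁻¹ := hinv ▸ hsum.hasSum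
  refine ⟨.of_mul_eq_one _ hright, hhasSum, fun i j => ?_⟩
  exact (Pi.hasSum.1 (Pi.hasSum.1 hhasSum i) j).nonneg fun k => Matrix.pow_apply_nonneg hnn k i j
end

section
/- Let λ¹, λ² ∈ ℝ^A with λ¹_a ≤ λ²_a for every arc a, and assume both λ¹ and λ² belong to the domain 𝒫. If (τ¹, z¹) solves the dynamic programming system at λ¹ and (τ², z²) solves it at λ², then τ¹_i ≤ τ²_i for every node i ∈ N. -/
/-! The normalisation `∑_a ∂φ_i/∂z_a = 1` makes `φ_i` commute with adding constants, so the
Bellman operator `T_λ τ = (φ_i(λ + τ ∘ head))_i` is monotone and translation-equivariant; a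
maximum-principle argument then puts every strict subsolution of `T_{λ²}` below `τ²`. Since `T_λ`
is concave in `τ` and monotone in `λ`, the points `θ τ̂ + (1 - θ) τ¹`, for `τ̂` a strict
subsolution at `λ¹` and `0 < θ ≤ 1`, are strict subsolutions at `λ²`; letting `θ → 0` gives
`τ¹ ≤ τ²`. -/

open Set Filter Topology

/-- `IsPathTo tail head d i p` : `p` is a list of arcs forming a directed path
from node `i` to the destination `d`. -/
def IsPathTo {N A : Type} (tail head : A → N) (d : N) : N → List A → Prop
  | i, [] => i = d
  | i, a :: p => tail a = i ∧ IsPathTo tail head d (head a) p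

theorem add_smul_eq_of_hasFDerivAt {E : Type*} [NormedAddCommGroup E] [NormedSpace ℝ E]
    {f : E → ℝ} {f' : E → E →L[ℝ] ℝ} {v : E} (hf : ∀ z, HasFDerivAt f (f' z) z)
    (hv : ∀ z, f' z v = 1) (z : E) (t : ℝ) : f (z + t • v) = f z + t := by
  have hg : ∀ s : ℝ, HasDerivAt (fun s : ℝ => f (z + s • v) - s) 0 s := by
    intro s
    have hline : HasDerivAt (fun s : ℝ => z + s • v) v s := by
      simpa using ((hasDerivAt_id s).smul_const v).const_add z
    have hfs := (hf (z + s • v)).comp_hasDerivAt s hline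
    rw [hv] at hfs
    simpa using hfs.fun_sub (hasDerivAt_id s)
  have := is_const_of_deriv_eq_zero (fun s => (hg s).differentiableAt) (fun s => (hg s).deriv) t 0
  simp only [zero_smul, add_zero, sub_zero] at this
  linarith

theorem apply_add_const_of_hasFDerivAt {A : Type*} [Fintype A] {f : (A → ℝ) → ℝ}
    {D : (A → ℝ) → A → ℝ}
    (hf : ∀ z, HasFDerivAt f (∑ a, D z a • (ContinuousLinearMap.proj a : (A → ℝ) →L[ℝ] ℝ)) z)
    (hD : ∀ z, ∑ a, D z a = 1) (z : A → ℝ) (c : ℝ) : f (fun a => z a + c) = f z + c := by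
  have hline : (fun a => z a + c) = z + c • 1 := by funext a; simp
  rw [hline, add_smul_eq_of_hasFDerivAt hf fun z => ?_]
  simpa only [FunLike.coe_sum, Finset.sum_apply, FunLike.coe_smul, Pi.smul_apply,
    ContinuousLinearMap.proj_apply, Pi.one_apply, smul_eq_mul, mul_one] using hD z

theorem ConcaveOn.combo_lt_apply_combo {E : Type*} [AddCommGroup E] [Module ℝ E] {F : E → ℝ}
    (hF : ConcaveOn ℝ univ F) {x y : E} {a b θ : ℝ} (ha : a < F x) (hb : b ≤ F y)
    (hθ₀ : 0 < θ) (hθ₁ : θ ≤ 1) : θ * a + (1 - θ) * b < F (θ • x + (1 - θ) • y) :=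
  calc θ * a + (1 - θ) * b < θ * F x + (1 - θ) * F y := by
        nlinarith [mul_le_mul_of_nonneg_left hb (sub_nonneg.2 hθ₁)]
    _ ≤ F (θ • x + (1 - θ) • y) :=
        hF.2 (mem_univ x) (mem_univ y) hθ₀.le (sub_nonneg.2 hθ₁) (by ring)

theorem le_of_forall_combo_le {a b c : ℝ} (h : ∀ θ ∈ Ioc (0 : ℝ) 1, θ * a + (1 - θ) * b ≤ c) :
    b ≤ c := by
  have hlim : Tendsto (fun θ : ℝ => θ * a + (1 - θ) * b) (𝓝[>] 0) (𝓝 b) := by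
    have : Continuous fun θ : ℝ => θ * a + (1 - θ) * b := by fun_prop
    simpa using (this.tendsto 0).mono_left nhdsWithin_le_nhds
  exact le_of_tendsto hlim (eventually_of_mem (Ioc_mem_nhdsGT one_pos) h)

/-- A positive maximum `c` of `σ - τ` sits at some `i₀ ≠ d`, and there
`σ i₀ < T i₀ σ ≤ T i₀ (τ + c) ≤ τ i₀ + c = σ i₀`. -/
theorem le_of_strictSubsolution {N : Type*} [Finite N] {d : N} {T : N → (N → ℝ) → ℝ}
    (hmono : ∀ i, i ≠ d → Monotone (T i))
    (hadd : ∀ i, i ≠ d → ∀ τ c, T i (fun j => τ j + c) = T i τ + c)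
    {σ τ : N → ℝ} (hd : σ d ≤ τ d) (hσ : ∀ i, i ≠ d → σ i < T i σ)
    (hτ : ∀ i, i ≠ d → T i τ ≤ τ i) : σ ≤ τ := by
  have : Nonempty N := ⟨d⟩
  obtain ⟨i₀, hmax⟩ := Finite.exists_max fun i => σ i - τ i
  suffices σ i₀ - τ i₀ ≤ 0 from fun i => by linarith [hmax i]
  by_contra! hpos
  have hi₀ : i₀ ≠ d := by rintro rfl; linarith
  have hσ_le : σ ≤ fun j => τ j + (σ i₀ - τ i₀) := fun j => by linarith [hmax j]
  have := calc σ i₀ < T i₀ σ := hσ i₀ hi₀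
    _ ≤ T i₀ τ + (σ i₀ - τ i₀) := (hmono i₀ hi₀ hσ_le).trans_eq (hadd i₀ hi₀ τ _)
    _ ≤ σ i₀ := by linarith [hτ i₀ hi₀]
  exact lt_irrefl _ this

section Bellman

variable {N A : Type*} (phi : N → (A → ℝ) → ℝ) (head : A → N)

def bellman (lam : A → ℝ) (i : N) (τ : N → ℝ) : ℝ :=
  phi i fun a => lam a + τ (head a)

variable {phi head}

theorem bellman_monotone {i : N} (h : Monotone (phi i)) (lam : A → ℝ) :
    Monotone (bellman phi head lam i) :=
  fun _ _ hστ => h fun a => add_le_add_right (hστ (head a)) _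

theorem bellman_le_bellman {i : N} (h : Monotone (phi i)) {lam₁ lam₂ : A → ℝ}
    (hle : lam₁ ≤ lam₂) (τ : N → ℝ) : bellman phi head lam₁ i τ ≤ bellman phi head lam₂ i τ :=
  h fun a => add_le_add_left (hle a) _

theorem bellman_add_const {i : N}
    (h : ∀ z : A → ℝ, ∀ c : ℝ, phi i (fun a => z a + c) = phi i z + c)
    (lam : A → ℝ) (τ : N → ℝ) (c : ℝ) :
    bellman phi head lam i (fun j => τ j + c) = bellman phi head lam i τ + c := by
  simp only [bellman, ← add_assoc]
  exact h _ c

theorem concaveOn_bellman {i : N} (h : ConcaveOn ℝ univ (phi i)) (lam : A → ℝ) :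
    ConcaveOn ℝ univ (bellman phi head lam i) := by
  refine ⟨convex_univ, fun σ _ τ _ a b ha hb hab => ?_⟩
  unfold bellman
  convert h.2 (mem_univ fun x => lam x + σ (head x)) (mem_univ fun x => lam x + τ (head x))
    ha hb hab using 2
  funext x
  simp only [Pi.add_apply, Pi.smul_apply, smul_eq_mul]
  linear_combination (-lam x) * hab

end Bellman

theorem stmt10_general {N A : Type} [Fintype N] [Fintype A] [DecidableEq N]
    (tail head : A → N) (d : N)
    (phi : N → (A → ℝ) → ℝ) (Dphi : N → (A → ℝ) → A → ℝ)
    (hconc : ∀ i, i ≠ d → ConcaveOn ℝ Set.univ (phi i))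
    (hderiv : ∀ i, i ≠ d → ∀ z : A → ℝ,
      HasFDerivAt (phi i)
        (∑ a, Dphi i z a • (ContinuousLinearMap.proj a : (A → ℝ) →L[ℝ] ℝ)) z)
    (hmono : ∀ i, i ≠ d → Monotone (phi i))
    (hDzero : ∀ i, i ≠ d → ∀ (z : A → ℝ) a, tail a ≠ i → Dphi i z a = 0)
    (hDsum : ∀ i, i ≠ d → ∀ z : A → ℝ,
      ∑ a ∈ Finset.univ.filter (fun a => tail a = i), Dphi i z a = 1)
    (lam₁ lam₂ : A → ℝ) (hle : ∀ a, lam₁ a ≤ lam₂ a)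
    (hP₁ : ∃ τhat : N → ℝ, τhat d ≤ 0 ∧
      ∀ i, i ≠ d → τhat i < phi i (fun a => lam₁ a + τhat (head a)))
    (τ₁ : N → ℝ) (z₁ : A → ℝ)
    (hτd₁ : τ₁ d = 0) (hz₁ : ∀ a, z₁ a = lam₁ a + τ₁ (head a))
    (hτ₁ : ∀ i, i ≠ d → τ₁ i = phi i z₁)
    (τ₂ : N → ℝ) (z₂ : A → ℝ)
    (hτd₂ : τ₂ d = 0) (hz₂ : ∀ a, z₂ a = lam₂ a + τ₂ (head a))
    (hτ₂ : ∀ i, i ≠ d → τ₂ i = phi i z₂) :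
    ∀ i, τ₁ i ≤ τ₂ i := by
  obtain ⟨τh, hτhd, hτh⟩ := hP₁
  obtain rfl : z₁ = fun a => lam₁ a + τ₁ (head a) := funext hz₁
  obtain rfl : z₂ = fun a => lam₂ a + τ₂ (head a) := funext hz₂
  have hadd : ∀ i, i ≠ d → ∀ z : A → ℝ, ∀ c : ℝ, phi i (fun a => z a + c) = phi i z + c :=
    fun i hi => apply_add_const_of_hasFDerivAt (hderiv i hi) fun z => by
      rw [← hDsum i hi z, Finset.sum_filter_of_ne fun a _ h => not_not.1 (mt (hDzero i hi z a) h)]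
  intro i
  refine le_of_forall_combo_le (a := τh i) fun θ ⟨hθ₀, hθ₁⟩ => ?_
  refine le_of_strictSubsolution (T := bellman phi head lam₂) (σ := θ • τh + (1 - θ) • τ₁)
    (fun j hj => bellman_monotone (hmono j hj) lam₂)
    (fun j hj => bellman_add_const (hadd j hj) lam₂) ?_ (fun j hj => ?_)
    (fun j hj => (hτ₂ j hj).ge) i
  · simp only [Pi.add_apply, Pi.smul_apply, smul_eq_mul, hτd₁, hτd₂]
    nlinarith
  · exact ((concaveOn_bellman (hconc j hj) lam₁).combo_lt_apply_combo (hτh j hj)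
      (hτ₁ j hj).le hθ₀ hθ₁).trans_le (bellman_le_bellman (hmono j hj) hle _)

/-- monotonicity of the expected delays `τ` as a function of the
link delays `λ`: if `λ¹ ≤ λ²` componentwise, both in the domain `𝒫`, and
`(τ¹,z¹)`, `(τ²,z²)` solve the dynamic programming system at `λ¹`, `λ²`
respectively, then `τ¹ ≤ τ²` componentwise. -/
theorem stmt10 {N A : Type} [Fintype N] [Fintype A] [DecidableEq N] [DecidableEq A]
    (tail head : A → N) (d : N)
    (phi : N → (A → ℝ) → ℝ) (Dphi : N → (A → ℝ) → A → ℝ)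
    (hout : ∀ i, i ≠ d → ∃ a, tail a = i)
    (hconn : ∀ i, ∃ p, IsPathTo tail head d i p)
    (hdep : ∀ i, i ≠ d → ∀ z z' : A → ℝ, (∀ a, tail a = i → z a = z' a) →
      phi i z = phi i z')
    (hcont : ∀ i, i ≠ d → Continuous (phi i))
    (hconc : ∀ i, i ≠ d → ConcaveOn ℝ Set.univ (phi i))
    (hderiv : ∀ i, i ≠ d → ∀ z : A → ℝ,
      HasFDerivAt (phi i)
        (∑ a, Dphi i z a • (ContinuousLinearMap.proj a : (A → ℝ) →L[ℝ] ℝ)) z)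
    (hmono : ∀ i, i ≠ d → Monotone (phi i))
    (hmin : ∀ i, i ≠ d → ∀ z : A → ℝ, ∀ a, tail a = i → phi i z ≤ z a)
    (hDnn : ∀ i, i ≠ d → ∀ z a, 0 ≤ Dphi i z a)
    (hDzero : ∀ i, i ≠ d → ∀ (z : A → ℝ) a, tail a ≠ i → Dphi i z a = 0)
    (hDsum : ∀ i, i ≠ d → ∀ z : A → ℝ,
      ∑ a ∈ Finset.univ.filter (fun a => tail a = i), Dphi i z a = 1)
    (lam₁ lam₂ : A → ℝ) (hle : ∀ a, lam₁ a ≤ lam₂ a)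
    (hP₁ : ∃ τhat : N → ℝ, τhat d ≤ 0 ∧
      ∀ i, i ≠ d → τhat i < phi i (fun a => lam₁ a + τhat (head a)))
    (hP₂ : ∃ τhat : N → ℝ, τhat d ≤ 0 ∧
      ∀ i, i ≠ d → τhat i < phi i (fun a => lam₂ a + τhat (head a)))
    (τ₁ : N → ℝ) (z₁ : A → ℝ)
    (hτd₁ : τ₁ d = 0) (hz₁ : ∀ a, z₁ a = lam₁ a + τ₁ (head a))
    (hτ₁ : ∀ i, i ≠ d → τ₁ i = phi i z₁)
    (τ₂ : N → ℝ) (z₂ : A → ℝ)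
    (hτd₂ : τ₂ d = 0) (hz₂ : ∀ a, z₂ a = lam₂ a + τ₂ (head a))
    (hτ₂ : ∀ i, i ≠ d → τ₂ i = phi i z₂) :
    ∀ i, τ₁ i ≤ τ₂ i :=
  stmt10_general tail head d phi Dphi hconc hderiv hmono hDzero hDsum lam₁ lam₂ hle hP₁ τ₁ z₁ hτd₁
    hz₁ hτ₁ τ₂ z₂ hτd₂ hz₂ hτ₂
end

section
/- Let U ⊆ ℝ^A be open and let τ : U → ℝ^N be differentiable with τ_d(λ) = 0 and τ_i(λ) = φ_i((λ_a + τ_{j_a}(λ))_{a∈A}) for every λ ∈ U and every node i ≠ d. Fix λ ∈ U, set z_a = λ_a + τ_{j_a}(λ), and assume the matrix I − P̂(z) is invertible. Then the Jacobian matrix of the map λ ↦ (τ_i(λ))_{i≠d} at λ equals (I − P̂(z))^{-1} Q̂(z), where Q̂(z) is the matrix with rows indexed by nodes i ≠ d and columns indexed by arcs a, with entries Q̂(z)_{ia} = ∂φ_i/∂z_a(z). -/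
/-!
Differentiating the fixed-point equation `τ_i(λ) = φ_i(λ + τ_{head}(λ))` at `λ` by the chain rule
gives, for `i ≠ d`, `∂τ_i = Q̂_i + Σ_a ∂_aφ_i(z) ∂τ_{j_a}`. Since `φ_i` only reads the out-arcs of
`i`, the sum runs over `a ∈ A_i^+`, and since `τ_d ≡ 0` near `λ`, the arcs into `d` drop out;
grouping the remaining arcs by their head turns the sum into `P̂ ∂τ`. Hence
`(I − P̂) ∂τ = Q̂`, and `I − P̂` is invertible.
-/

open Finset Filter Topology

section Calculus

variable {𝕜 : Type*} [NontriviallyNormedField 𝕜]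

theorem HasFDerivAt.apply_eq_zero_of_forall_add_smul_eq {E F : Type*} [NormedAddCommGroup E]
    [NormedSpace 𝕜 E] [NormedAddCommGroup F] [NormedSpace 𝕜 F] {f : E → F} {f' : E →L[𝕜] F}
    {x v : E} (hf : HasFDerivAt f f' x) (hconst : ∀ t : 𝕜, f (x + t • v) = f x) : f' v = 0 := by
  have h0 : HasLineDerivAt 𝕜 f 0 x v := by
    show HasDerivAt (fun t : 𝕜 => f (x + t • v)) 0 0
    simp_rw [hconst]
    exact hasDerivAt_const _ _
  exact (hf.hasLineDerivAt v).unique h0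

variable {A : Type*} [Fintype A] [DecidableEq A]

theorem sum_smul_proj_apply_single (c : A → 𝕜) (b : A) :
    (∑ a, c a • (ContinuousLinearMap.proj a : (A → 𝕜) →L[𝕜] 𝕜)) (Pi.single b 1) = c b := by
  simp [Pi.single_apply]

theorem HasFDerivAt.sum_smul_proj_coeff_eq_zero {f : (A → 𝕜) → 𝕜} {c z : A → 𝕜}
    (hf : HasFDerivAt f (∑ a, c a • (ContinuousLinearMap.proj a : (A → 𝕜) →L[𝕜] 𝕜)) z)
    {p : A → Prop} (hp : ∀ z', (∀ a, p a → z a = z' a) → f z = f z') {b : A} (hb : ¬ p b) :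
    c b = 0 := by
  rw [← sum_smul_proj_apply_single c b]
  refine hf.apply_eq_zero_of_forall_add_smul_eq fun t => (hp _ fun a ha => ?_).symm
  have hab : a ≠ b := fun h => hb (h ▸ ha)
  simp [Pi.single_eq_of_ne hab]

theorem fderiv_apply_single_eq_of_eventuallyEq_comp_add {N : Type*} {head : A → N}
    {τ : (A → 𝕜) → N → 𝕜} {lam : A → 𝕜}
    (hτ : ∀ b, DifferentiableAt 𝕜 (fun l => τ l (head b)) lam) {f : (A → 𝕜) → 𝕜} {c : A → 𝕜}
    (hf : HasFDerivAt f (∑ a, c a • (ContinuousLinearMap.proj a : (A → 𝕜) →L[𝕜] 𝕜))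
      (fun b => lam b + τ lam (head b)))
    {g : (A → 𝕜) → 𝕜} (hg : g =ᶠ[𝓝 lam] fun l => f (fun b => l b + τ l (head b))) (a : A) :
    fderiv 𝕜 g lam (Pi.single a 1) =
      c a + ∑ b, c b * fderiv 𝕜 (fun l => τ l (head b)) lam (Pi.single a 1) := by
  have hinner : HasFDerivAt (fun l b => l b + τ l (head b))
      (ContinuousLinearMap.pi fun b =>
        ContinuousLinearMap.proj b + fderiv 𝕜 (fun l => τ l (head b)) lam) lam :=
    hasFDerivAt_pi.2 fun b => (ContinuousLinearMap.proj b).hasFDerivAt.add (hτ b).hasFDerivAt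
  rw [((hf.comp lam hinner).congr_of_eventuallyEq hg).fderiv]
  simp [Pi.single_apply, mul_add, sum_add_distrib]

end Calculus

theorem sum_mul_apply_head_eq_sum_subtype_ne {A N R : Type*} [Fintype A] [Fintype N]
    [DecidableEq N] [NonUnitalNonAssocSemiring R] (tail head : A → N) {i d : N} {c : A → R}
    {F : N → R} (hc : ∀ b, tail b ≠ i → c b = 0) (hF : F d = 0) :
    ∑ b, c b * F (head b) =
      ∑ j : {j : N // j ≠ d}, (∑ b with tail b = i ∧ head b = j.1, c b) * F j.1 := by
  have hfiber : ∀ j, ∑ b with head b = j, c b * F (head b) =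
      (∑ b with tail b = i ∧ head b = j, c b) * F j := by
    intro j
    rw [sum_mul, sum_filter, sum_filter]
    refine sum_congr rfl fun b _ => ?_
    by_cases hb : tail b = i <;> by_cases hj : head b = j <;> simp [hb, hj, hc]
  rw [← sum_fiberwise univ head, Fintype.sum_eq_add_sum_subtype_ne _ d, hfiber, hF, mul_zero,
    zero_add]
  exact sum_congr rfl fun j _ => hfiber j

theorem stmt11_general {N A : Type} [Fintype N] [Fintype A] [DecidableEq N] [DecidableEq A]
    (tail head : A → N) (d : N)
    (phi : N → (A → ℝ) → ℝ) (Dphi : N → (A → ℝ) → A → ℝ)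
    (hdep : ∀ i, i ≠ d → ∀ z z' : A → ℝ, (∀ a, tail a = i → z a = z' a) →
      phi i z = phi i z')
    -- φ_i is continuously differentiable with partial derivatives `Dphi i`
    (hderiv : ∀ i, i ≠ d → ∀ z : A → ℝ,
      HasFDerivAt (phi i)
        (∑ a, Dphi i z a • (ContinuousLinearMap.proj a : (A → ℝ) →L[ℝ] ℝ)) z)
    (U : Set (A → ℝ)) (hU : IsOpen U)
    (τ : (A → ℝ) → N → ℝ)
    (hτdiff : ∀ lam ∈ U, ∀ i, DifferentiableAt ℝ (fun l => τ l i) lam)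
    (hτd : ∀ lam ∈ U, τ lam d = 0)
    (hτeq : ∀ lam ∈ U, ∀ i, i ≠ d →
      τ lam i = phi i (fun a => lam a + τ lam (head a)))
    (lam : A → ℝ) (hlam : lam ∈ U)
    (z : A → ℝ) (hz : ∀ a, z a = lam a + τ lam (head a))
    (Phat : Matrix {i : N // i ≠ d} {i : N // i ≠ d} ℝ)
    (hPhat : Phat = Matrix.of fun i j =>
      ∑ a ∈ Finset.univ.filter (fun a => tail a = i.1 ∧ head a = j.1), Dphi i.1 z a)
    (hinv : IsUnit ((1 : Matrix {i : N // i ≠ d} {i : N // i ≠ d} ℝ) - Phat))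
    (Qhat : Matrix {i : N // i ≠ d} A ℝ)
    (hQhat : Qhat = Matrix.of fun i a => Dphi i.1 z a) :
    ∀ (i : {i : N // i ≠ d}) (a : A),
      fderiv ℝ (fun l => τ l i.1) lam (Pi.single a 1) =
        ((1 - Phat)⁻¹ * Qhat) i a := by
  set J : Matrix {i : N // i ≠ d} A ℝ :=
    Matrix.of fun i a => fderiv ℝ (fun l => τ l i.1) lam (Pi.single a 1) with hJ
  have hUlam : U ∈ 𝓝 lam := hU.mem_nhds hlam
  have hτd' : fderiv ℝ (fun l => τ l d) lam = 0 := by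
    have hτd_nhds : (fun l => τ l d) =ᶠ[𝓝 lam] fun _ => 0 :=
      eventually_of_mem hUlam fun l hl => hτd l hl
    rw [hτd_nhds.fderiv_eq, fderiv_const_apply]
  have hrow : ∀ i a, J i a = Qhat i a + ∑ j, Phat i j * J j a := by
    intro i a
    have hφ : HasFDerivAt (phi i.1)
        (∑ b, Dphi i.1 z b • (ContinuousLinearMap.proj b : (A → ℝ) →L[ℝ] ℝ))
        (fun b => lam b + τ lam (head b)) := by
      rw [← funext hz]
      exact hderiv i.1 i.2 z
    have hoff : ∀ b, tail b ≠ i.1 → Dphi i.1 z b = 0 := fun b hb =>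
      (hderiv i.1 i.2 z).sum_smul_proj_coeff_eq_zero (hdep i.1 i.2 z) hb
    rw [hJ, Matrix.of_apply, fderiv_apply_single_eq_of_eventuallyEq_comp_add
      (fun b => hτdiff lam hlam (head b)) hφ
      (eventually_of_mem hUlam fun l hl => hτeq l hl i.1 i.2),
      sum_mul_apply_head_eq_sum_subtype_ne tail head hoff
        (F := fun j => fderiv ℝ (fun l => τ l j) lam (Pi.single a 1)) (by rw [hτd']; rfl)]
    simp only [hQhat, hPhat, Matrix.of_apply]
  have hmat : (1 - Phat) * J = Qhat := by
    ext i a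
    rw [Matrix.sub_mul, Matrix.one_mul, Matrix.sub_apply, Matrix.mul_apply, sub_eq_iff_eq_add,
      hrow]
  intro i a
  rw [← hmat, Matrix.nonsing_inv_mul_cancel_left _ _ ((Matrix.isUnit_iff_isUnit_det _).mp hinv)]
  rfl

/-- if `τ : U → ℝ^N` is differentiable and solves the dynamic
programming equations on the open set `U`, and `I − P̂(z)` is invertible at some
`λ ∈ U` (with `z_a = λ_a + τ_{j_a}(λ)`), then the Jacobian of `λ ↦ (τ_i(λ))_{i≠d}`
at `λ` equals `(I − P̂(z))⁻¹ Q̂(z)`. -/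
theorem stmt11 {N A : Type} [Fintype N] [Fintype A] [DecidableEq N] [DecidableEq A]
    (tail head : A → N) (d : N)
    (phi : N → (A → ℝ) → ℝ) (Dphi : N → (A → ℝ) → A → ℝ)
    (hout : ∀ i, i ≠ d → ∃ a, tail a = i)
    (hdep : ∀ i, i ≠ d → ∀ z z' : A → ℝ, (∀ a, tail a = i → z a = z' a) →
      phi i z = phi i z')
    -- φ_i is continuously differentiable with partial derivatives `Dphi i`
    (hderiv : ∀ i, i ≠ d → ∀ z : A → ℝ,
      HasFDerivAt (phi i)
        (∑ a, Dphi i z a • (ContinuousLinearMap.proj a : (A → ℝ) →L[ℝ] ℝ)) z)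
    (hDcont : ∀ i, i ≠ d → Continuous (fun z : A → ℝ => Dphi i z))
    (U : Set (A → ℝ)) (hU : IsOpen U)
    (τ : (A → ℝ) → N → ℝ)
    (hτdiff : ∀ lam ∈ U, ∀ i, DifferentiableAt ℝ (fun l => τ l i) lam)
    (hτd : ∀ lam ∈ U, τ lam d = 0)
    (hτeq : ∀ lam ∈ U, ∀ i, i ≠ d →
      τ lam i = phi i (fun a => lam a + τ lam (head a)))
    (lam : A → ℝ) (hlam : lam ∈ U)
    (z : A → ℝ) (hz : ∀ a, z a = lam a + τ lam (head a))
    (Phat : Matrix {i : N // i ≠ d} {i : N // i ≠ d} ℝ)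
    (hPhat : Phat = Matrix.of fun i j =>
      ∑ a ∈ Finset.univ.filter (fun a => tail a = i.1 ∧ head a = j.1), Dphi i.1 z a)
    (hinv : IsUnit ((1 : Matrix {i : N // i ≠ d} {i : N // i ≠ d} ℝ) - Phat))
    (Qhat : Matrix {i : N // i ≠ d} A ℝ)
    (hQhat : Qhat = Matrix.of fun i a => Dphi i.1 z a) :
    ∀ (i : {i : N // i ≠ d}) (a : A),
      fderiv ℝ (fun l => τ l i.1) lam (Pi.single a 1) =
        ((1 - Phat)⁻¹ * Qhat) i a :=
  stmt11_general tail head d phi Dphi hdep hderiv U hU τ hτdiff hτd hτeq lam hlam z hz Phat hPhat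
    hinv Qhat hQhat
end

section
/- Let n ≥ 1 and let φ : ℝⁿ → ℝ be componentwise nondecreasing and such that for every index i the following limit property holds: for every x ∈ ℝⁿ and every ε > 0 there exists M such that |φ(y) − x_i| < ε whenever y_i = x_i and y_j ≥ M for all j ≠ i. Then φ(x) ≤ min_{1≤i≤n} x_i for every x ∈ ℝⁿ. -/
/-! Raising every coordinate other than `x i` to at least `M` can only increase `φ`, and for
large `M` it brings `φ` within `ε` of `x i`; hence `φ x < x i + ε` for every `ε > 0`. -/

theorem le_apply_of_monotone_of_forall_lt_add {ι : Type*} [DecidableEq ι]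
    {φ : (ι → ℝ) → ℝ} (hφ : Monotone φ) (x : ι → ℝ) (i : ι)
    (hbound : ∀ ε > (0 : ℝ), ∃ M : ℝ,
      ∀ y : ι → ℝ, y i = x i → (∀ j, j ≠ i → M ≤ y j) → φ y < x i + ε) :
    φ x ≤ x i := by
  refine le_of_forall_pos_lt_add fun ε hε => ?_
  obtain ⟨M, hM⟩ := hbound ε hε
  set y := Function.update (fun j => max (x j) M) i (x i)
  have hxy : x ≤ y := by
    intro j
    rcases eq_or_ne j i with rfl | hj
    · simp [y]
    · simp [y, hj]
  calc φ x ≤ φ y := hφ hxy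
    _ < x i + ε := hM y (by simp [y]) fun j hj => by simp [y, hj]

theorem stmt12_general (n : ℕ) (phi : (Fin n → ℝ) → ℝ)
    (hmono : ∀ x y : Fin n → ℝ, (∀ j, x j ≤ y j) → phi x ≤ phi y)
    (hlim : ∀ (i : Fin n) (x : Fin n → ℝ), ∀ ε > (0:ℝ), ∃ M : ℝ,
      ∀ y : Fin n → ℝ, y i = x i → (∀ j, j ≠ i → M ≤ y j) → |phi y - x i| < ε) :
    ∀ (x : Fin n → ℝ) (i : Fin n), phi x ≤ x i := by
  intro x i
  refine le_apply_of_monotone_of_forall_lt_add (fun x y hxy => hmono x y hxy) x i fun ε hε => ?_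
  obtain ⟨M, hM⟩ := hlim i x ε hε
  exact ⟨M, fun y hyi hyM => sub_lt_iff_lt_add'.mp (abs_lt.mp (hM y hyi hyM)).2⟩

/-- a componentwise nondecreasing map `φ : ℝⁿ → ℝ` satisfying the
limit property `φ(y) → x_i` as `y_j → ∞` for `j ≠ i` with `y_i = x_i` fixed,
satisfies `φ(x) ≤ min_i x_i` for every `x`. -/
theorem stmt12 (n : ℕ) (hn : 1 ≤ n) (phi : (Fin n → ℝ) → ℝ)
    (hmono : ∀ x y : Fin n → ℝ, (∀ j, x j ≤ y j) → phi x ≤ phi y)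
    (hlim : ∀ (i : Fin n) (x : Fin n → ℝ), ∀ ε > (0:ℝ), ∃ M : ℝ,
      ∀ y : Fin n → ℝ, y i = x i → (∀ j, j ≠ i → M ≤ y j) → |phi y - x i| < ε) :
    ∀ (x : Fin n → ℝ) (i : Fin n), phi x ≤ x i :=
  stmt12_general n phi hmono hlim
end

section
/- Let P ⊆ ℝ^A be an open convex set with A a nonempty finite set, let λ⁰ ∈ ℝ^A, and for each a ∈ A let g_a : ℝ → ℝ be continuous and strictly increasing. Let K be a finite set and for each k ∈ K let F_k : ℝ → ℝ be concave and nondecreasing and q^k : P → ℝ be concave. Then the function Φ(λ) = Σ_{a∈A} ∫_{λ_a⁰}^{λ_a} g_a(z) dz − Σ_{k∈K} F_k(q^k(λ)) is strictly convex on P. -/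
/-!
Each primitive `t ↦ ∫_{λ⁰_a}^t g_a` has the strictly increasing derivative `g_a`, so it is
strictly convex, and a sum of strictly convex functions of distinct coordinates is strictly
convex, since two distinct points differ in some coordinate. Each `F_k ∘ q^k` is concave
(a nondecreasing concave function of a concave one), so subtracting their sum preserves strict
convexity.
-/

open intervalIntegral

theorem strictConvexOn_univ_integral_of_strictMono {g : ℝ → ℝ} (hgc : Continuous g)
    (hgm : StrictMono g) (a : ℝ) :
    StrictConvexOn ℝ Set.univ (fun t => ∫ z in a..t, g z) := by
  refine StrictMono.strictConvexOn_univ_of_deriv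
    (continuous_primitive (fun _ _ => hgc.intervalIntegrable _ _) a) ?_
  rwa [funext (Continuous.deriv_integral g hgc a)]

section

variable {𝕜 E α β ι : Type*} [Semiring 𝕜] [PartialOrder 𝕜] [AddCommMonoid E]
  [AddCommMonoid α] [PartialOrder α] [AddCommMonoid β] [PartialOrder β]

theorem ConcaveOn.comp_of_univ [SMul 𝕜 E] [SMul 𝕜 α] [SMul 𝕜 β] {s : Set E} {f : E → β}
    {g : β → α} (hg : ConcaveOn 𝕜 Set.univ g) (hf : ConcaveOn 𝕜 s f) (hg' : Monotone g) :
    ConcaveOn 𝕜 s (g ∘ f) :=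
  ⟨hf.1, fun _ hx _ hy _ _ ha hb hab =>
    (hg.2 (Set.mem_univ _) (Set.mem_univ _) ha hb hab).trans (hg' (hf.2 hx hy ha hb hab))⟩

theorem ConcaveOn.sum [SMul 𝕜 E] [IsOrderedAddMonoid β] [Module 𝕜 β] {s : Set E}
    {f : ι → E → β} (t : Finset ι) (hs : Convex 𝕜 s) (hf : ∀ i ∈ t, ConcaveOn 𝕜 s (f i)) :
    ConcaveOn 𝕜 s (fun x => ∑ i ∈ t, f i x) := by
  simpa only [← Finset.sum_apply] using
    Finset.sum_induction f (ConcaveOn 𝕜 s) (fun _ _ => ConcaveOn.add)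
      (concaveOn_const (0 : β) hs) hf

theorem StrictConvexOn.sum_comp_eval [Module 𝕜 E] [Fintype ι] [IsOrderedCancelAddMonoid β]
    [Module 𝕜 β] {φ : ι → E → β} (hφ : ∀ i, StrictConvexOn 𝕜 Set.univ (φ i))
    {s : Set (ι → E)} (hs : Convex 𝕜 s) :
    StrictConvexOn 𝕜 s (fun x => ∑ i, φ i (x i)) := by
  refine ⟨hs, fun x _ y _ hxy a b ha hb hab => ?_⟩
  obtain ⟨i₀, hi₀⟩ := Function.ne_iff.mp hxy
  calc ∑ i, φ i ((a • x + b • y) i)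
      < ∑ i, (a • φ i (x i) + b • φ i (y i)) :=
        Finset.sum_lt_sum
          (fun i _ =>
            (hφ i).convexOn.2 (Set.mem_univ (x i)) (Set.mem_univ (y i)) ha.le hb.le hab)
          ⟨i₀, Finset.mem_univ _, (hφ i₀).2 (Set.mem_univ _) (Set.mem_univ _) hi₀ ha hb hab⟩
    _ = a • ∑ i, φ i (x i) + b • ∑ i, φ i (y i) := by
        rw [Finset.sum_add_distrib, Finset.smul_sum, Finset.smul_sum]

end

theorem stmt13_general {A : Type} [Fintype A]
    {K : Type} [Fintype K]
    (P : Set (A → ℝ)) (hPconv : Convex ℝ P)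
    (lam0 : A → ℝ)
    (g : A → ℝ → ℝ)
    (hgc : ∀ a, Continuous (g a)) (hgm : ∀ a, StrictMono (g a))
    (F : K → ℝ → ℝ)
    (hFconc : ∀ k, ConcaveOn ℝ Set.univ (F k)) (hFmono : ∀ k, Monotone (F k))
    (q : K → (A → ℝ) → ℝ) (hq : ∀ k, ConcaveOn ℝ P (q k)) :
    StrictConvexOn ℝ P
      (fun lam => (∑ a, ∫ z in lam0 a..lam a, g a z) - ∑ k, F k (q k lam)) := by
  have hprimitives : StrictConvexOn ℝ P (fun lam => ∑ a, ∫ z in lam0 a..lam a, g a z) :=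
    StrictConvexOn.sum_comp_eval
      (fun a => strictConvexOn_univ_integral_of_strictMono (hgc a) (hgm a) (lam0 a)) hPconv
  have hpenalty : ConcaveOn ℝ P (fun lam => ∑ k, F k (q k lam)) :=
    ConcaveOn.sum Finset.univ hPconv fun k _ => (hFconc k).comp_of_univ (hq k) (hFmono k)
  exact hprimitives.sub_concaveOn hpenalty

/-- with `g_a` continuous strictly increasing, `F_k` concave
nondecreasing and `q^k` concave on the open convex set `P`, the function
`Φ(λ) = Σ_a ∫_{λ⁰_a}^{λ_a} g_a(z) dz − Σ_k F_k(q^k(λ))` is strictly convex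
on `P`. -/
theorem stmt13 {A : Type} [Fintype A] [Nonempty A]
    {K : Type} [Fintype K]
    (P : Set (A → ℝ)) (hPopen : IsOpen P) (hPconv : Convex ℝ P)
    (lam0 : A → ℝ)
    (g : A → ℝ → ℝ)
    (hgc : ∀ a, Continuous (g a)) (hgm : ∀ a, StrictMono (g a))
    (F : K → ℝ → ℝ)
    (hFconc : ∀ k, ConcaveOn ℝ Set.univ (F k)) (hFmono : ∀ k, Monotone (F k))
    (q : K → (A → ℝ) → ℝ) (hq : ∀ k, ConcaveOn ℝ P (q k)) :
    StrictConvexOn ℝ P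
      (fun lam => (∑ a, ∫ z in lam0 a..lam a, g a z) - ∑ k, F k (q k lam)) :=
  stmt13_general P hPconv lam0 g hgc hgm F hFconc hFmono q hq
end

section
/- For each k ∈ K, suppose τ^k : U → ℝ^N is differentiable and solves, at every λ ∈ U, the dynamic programming system for destination d_k with maps φ_i^k, and that I − P̂^k(z^k(λ)) is invertible, where z^k(λ)_a = λ_a + τ^k_{j_a}(λ). Let τ_k⁰ ∈ ℝ be constants, q^k(λ) = τ^k_{s_k}(λ) − τ_k⁰, and assume q^k(λ) > 0 on U. Set x̃^k(λ) = f_k(q^k(λ)), y^k(λ) = (I − P̂^k(z^k(λ))ᵀ)^{-1} δ^k x̃^k(λ) with δ^k the indicator vector of s_k, v^k_a(λ) = y^k_{i_a}(λ) · ∂φ_{i_a}^k/∂z_a(z^k(λ)), and w̃_a(λ) = Σ_{k∈K} v^k_a(λ). Then the function Φ(λ) = Σ_{a∈A} ∫_{λ_a⁰}^{λ_a} s_a^{-1}(z) dz − Σ_{k∈K} F_k(q^k(λ)) is differentiable on U with ∂Φ/∂λ_a(λ) = s_a^{-1}(λ_a) − w̃_a(λ) for every arc a; consequently, λ* ∈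 U satisfies ∇Φ(λ*) = 0 if and only if s_a^{-1}(λ*_a) = w̃_a(λ*) for every arc a, i.e. λ*_a = s_a(w̃_a(λ*)). -/
/-!
Differentiating the dynamic programming system at `λ` in a direction `u`, the derivatives
`L_i = Dτ_i(λ) u` satisfy `L_d = 0` and `(I - P̂) L = g` with `g_i = Σ_a ∂φ_i/∂z_a · u_a`, since
`∂φ_i/∂z_a` vanishes off the arcs leaving `i`. By the chain rule the derivative of `F_k(q^k)` is
`x̃ · L_s = (x̃ δ) ⬝ (I - P̂)⁻¹ g = ((I - P̂ᵀ)⁻¹ x̃ δ) ⬝ g = y ⬝ g`, and regrouping `y ⬝ g` by arcs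
gives `Σ_a v_a u_a`. The integral terms contribute `s_a⁻¹(λ_a)` by the fundamental theorem of
calculus.
-/

open Finset Matrix

noncomputable section

namespace DPSensitivity

section Algebra

variable {R N A : Type*} [CommRing R] [Fintype N] [DecidableEq N] {tail head : A → N} {d : N}

theorem inv_transpose_mulVec_dotProduct {n : Type*} [Fintype n] [DecidableEq n]
    {M : Matrix n n R} (hM : IsUnit M) {t g : n → R} (h : M *ᵥ t = g) (δ : n → R) :
    (Mᵀ)⁻¹ *ᵥ δ ⬝ᵥ g = δ ⬝ᵥ t := by
  rw [← transpose_nonsing_inv, mulVec_transpose, ← dotProduct_mulVec, ← h, mulVec_mulVec,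
    nonsing_inv_mul _ ((isUnit_iff_isUnit_det _).mp hM), one_mulVec]

theorem indicator_dotProduct (s : N) (r : R) {x : N → R} (hxd : x d = 0) :
    (fun i : {i // i ≠ d} => if i.1 = s then r else 0) ⬝ᵥ (fun j => x j.1) = r * x s := by
  by_cases hs : s = d
  · subst hs
    rw [hxd, mul_zero]
    exact Fintype.sum_eq_zero _ fun i => by simp [i.2]
  · rw [dotProduct, Fintype.sum_eq_single ⟨s, hs⟩ fun i hi => by
      rw [if_neg fun he => hi (Subtype.ext he), zero_mul]]
    simp

theorem sum_mul_eq_dite (y : {i // i ≠ d} → R) {D : N → A → R}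
    (hD : ∀ i ≠ d, ∀ a, tail a ≠ i → D i a = 0) (a : A) :
    ∑ i : {i // i ≠ d}, y i * D i.1 a
      = if h : tail a ≠ d then y ⟨tail a, h⟩ * D (tail a) a else 0 := by
  split_ifs with h
  · refine Fintype.sum_eq_single _ fun i hi => ?_
    rw [hD i i.2 a fun he => hi (Subtype.ext he.symm), mul_zero]
  · refine Fintype.sum_eq_zero _ fun i => ?_
    rw [hD i i.2 a fun he => i.2 (he.symm.trans (not_not.mp h)), mul_zero]

variable [Fintype A]

variable (tail head d) in
def arcMatrix (D : N → A → R) : Matrix {i // i ≠ d} {i // i ≠ d} R :=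
  Matrix.of fun i j => ∑ a ∈ univ.filter (fun a => tail a = i.1 ∧ head a = j.1), D i.1 a

variable (tail head d) in
def nodeFlow (D : N → A → R) (s : N) (r : R) : {i // i ≠ d} → R :=
  (1 - (arcMatrix tail head d D)ᵀ)⁻¹ *ᵥ fun i => if i.1 = s then r else 0

variable (tail head d) in
def arcFlow (D : N → A → R) (s : N) (r : R) (a : A) : R :=
  if h : tail a ≠ d then nodeFlow tail head d D s r ⟨tail a, h⟩ * D (tail a) a else 0

theorem sum_mul_head_eq_arcMatrix_mulVec {D : N → A → R} {x : N → R} (hxd : x d = 0)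
    (i : {i // i ≠ d}) (hD : ∀ a, tail a ≠ i.1 → D i.1 a = 0) :
    ∑ a, D i.1 a * x (head a) = (arcMatrix tail head d D *ᵥ fun j => x j.1) i := by
  have hfiber : ∀ j, ∑ a ∈ univ.filter (fun a => head a = j), D i.1 a * x (head a)
      = (∑ a ∈ univ.filter (fun a => tail a = i.1 ∧ head a = j), D i.1 a) * x j := by
    intro j
    rw [sum_mul, sum_filter, sum_filter]
    refine sum_congr rfl fun a _ => ?_
    by_cases hh : head a = j <;> by_cases ht : tail a = i.1 <;> simp [hh, ht, hD]
  rw [← sum_fiberwise univ head, Fintype.sum_eq_add_sum_subtype_ne _ d]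
  simp only [hfiber, hxd, mul_zero, zero_add]
  rfl

theorem one_sub_arcMatrix_mulVec {D : N → A → R} (hD : ∀ i ≠ d, ∀ a, tail a ≠ i → D i a = 0)
    {u : A → R} {x : N → R} (hxd : x d = 0)
    (hx : ∀ i ≠ d, x i = ∑ a, D i a * (u a + x (head a))) :
    (1 - arcMatrix tail head d D) *ᵥ (fun j => x j.1) = fun i => ∑ a, D i.1 a * u a := by
  funext i
  rw [sub_mulVec, one_mulVec, Pi.sub_apply,
    ← sum_mul_head_eq_arcMatrix_mulVec hxd i (hD i i.2), hx i i.2]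
  simp only [mul_add, sum_add_distrib, add_sub_cancel_right]

theorem mul_apply_eq_sum_arcFlow_mul {D : N → A → R}
    (hP : IsUnit (1 - arcMatrix tail head d D)) (hD : ∀ i ≠ d, ∀ a, tail a ≠ i → D i a = 0)
    {u : A → R} {x : N → R} (hxd : x d = 0)
    (hx : ∀ i ≠ d, x i = ∑ a, D i a * (u a + x (head a))) (s : N) (r : R) :
    r * x s = ∑ a, arcFlow tail head d D s r a * u a := by
  have hadj := inv_transpose_mulVec_dotProduct hP (one_sub_arcMatrix_mulVec hD hxd hx)
    fun i => if i.1 = s then r else 0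
  rw [transpose_sub, transpose_one, indicator_dotProduct s r hxd] at hadj
  rw [← hadj, dotProduct]
  simp only [mul_sum, ← mul_assoc]
  rw [sum_comm]
  refine sum_congr rfl fun a _ => ?_
  rw [← sum_mul, sum_mul_eq_dite _ hD]
  rfl

end Algebra

section Calculus

theorem hasDerivAt_integral_of_continuousOn_Ici {g : ℝ → ℝ} {l0 x : ℝ}
    (hg : ContinuousOn g (Set.Ici l0)) (hx : l0 < x) :
    HasDerivAt (fun y => ∫ z in l0..y, g z) (g x) x := by
  refine intervalIntegral.integral_hasDerivAt_right ?_ ?_ (hg.continuousAt (Ici_mem_nhds hx))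
  · refine (hg.mono ?_).intervalIntegrable
    rw [Set.uIcc_of_le hx.le]
    exact Set.Icc_subset_Ici_self
  · exact (hg.mono Set.Ioi_subset_Ici_self).stronglyMeasurableAtFilter isOpen_Ioi x hx

variable {N A : Type*} [Fintype A]

theorem sum_smul_proj_eq_zero_iff {𝕜 : Type*} [NontriviallyNormedField 𝕜] (c : A → 𝕜) :
    ∑ a, c a • (ContinuousLinearMap.proj a : (A → 𝕜) →L[𝕜] 𝕜) = 0 ↔ ∀ a, c a = 0 := by
  classical
  refine ⟨fun h a => ?_, fun h => by ext; simp [h]⟩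
  simpa [Pi.single_apply] using DFunLike.congr_fun h (Pi.single a (1 : 𝕜))

theorem hasFDerivAt_sum_integral {lam0 : A → ℝ} {g : A → ℝ → ℝ}
    (hg : ∀ a, ContinuousOn (g a) (Set.Ici (lam0 a))) {lam : A → ℝ}
    (hlam : ∀ a, lam0 a < lam a) :
    HasFDerivAt (fun l : A → ℝ => ∑ a, ∫ z in lam0 a..l a, g a z)
      (∑ a, g a (lam a) • (ContinuousLinearMap.proj a : (A → ℝ) →L[ℝ] ℝ)) lam :=
  HasFDerivAt.fun_sum fun a _ =>
    ((hasDerivAt_integral_of_continuousOn_Ici (hg a) (hlam a)).comp_hasFDerivAt lam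
      (hasFDerivAt_apply (𝕜 := ℝ) a lam) :)

def arcDelay (head : A → N) (τ : (A → ℝ) → N → ℝ) (lam : A → ℝ) (a : A) : ℝ :=
  lam a + τ lam (head a)

theorem fderiv_apply_eq_of_eventuallyEq_comp_arcDelay {τ : (A → ℝ) → N → ℝ} {head : A → N}
    {lam : A → ℝ} (hτ : ∀ j, DifferentiableAt ℝ (fun l => τ l j) lam)
    {phi : (A → ℝ) → ℝ} {D : A → ℝ}
    (hphi : HasFDerivAt phi (∑ a, D a • (ContinuousLinearMap.proj a : (A → ℝ) →L[ℝ] ℝ))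
      (arcDelay head τ lam))
    {i : N} (hi : (fun l => τ l i) =ᶠ[nhds lam] fun l => phi (arcDelay head τ l))
    (u : A → ℝ) :
    fderiv ℝ (fun l => τ l i) lam u
      = ∑ a, D a * (u a + fderiv ℝ (fun l => τ l (head a)) lam u) := by
  have hz : HasFDerivAt (arcDelay head τ)
      (ContinuousLinearMap.pi fun a =>
        (ContinuousLinearMap.proj a : (A → ℝ) →L[ℝ] ℝ) + fderiv ℝ (fun l => τ l (head a)) lam)
      lam :=
    hasFDerivAt_pi.2 fun a => (hasFDerivAt_apply (𝕜 := ℝ) a lam).add (hτ (head a)).hasFDerivAt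
  rw [((hphi.comp lam hz).congr_of_eventuallyEq hi).fderiv]
  simp

theorem hasFDerivAt_comp_queueDelay [Fintype N] [DecidableEq N] {tail head : A → N} {d s : N}
    {phi : N → (A → ℝ) → ℝ} {Dphi : N → (A → ℝ) → A → ℝ} {τ : (A → ℝ) → N → ℝ}
    {U : Set (A → ℝ)} (hU : IsOpen U) {lam : A → ℝ} (hlam : lam ∈ U)
    (hτdiff : ∀ i, DifferentiableAt ℝ (fun l => τ l i) lam)
    (hτd : ∀ l ∈ U, τ l d = 0)
    (hτeq : ∀ l ∈ U, ∀ i, i ≠ d → τ l i = phi i (arcDelay head τ l))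
    (hderiv : ∀ i, i ≠ d → HasFDerivAt (phi i)
      (∑ a, Dphi i (arcDelay head τ lam) a • (ContinuousLinearMap.proj a : (A → ℝ) →L[ℝ] ℝ))
      (arcDelay head τ lam))
    (hDzero : ∀ i, i ≠ d → ∀ a, tail a ≠ i → Dphi i (arcDelay head τ lam) a = 0)
    (hinv : IsUnit (1 - arcMatrix tail head d fun i => Dphi i (arcDelay head τ lam)))
    {F : ℝ → ℝ} {f τ0 : ℝ} (hF : HasDerivAt F f (τ lam s - τ0)) :
    HasFDerivAt (fun l => F (τ l s - τ0))
      (∑ a, arcFlow tail head d (fun i => Dphi i (arcDelay head τ lam)) s f a •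
        (ContinuousLinearMap.proj a : (A → ℝ) →L[ℝ] ℝ)) lam := by
  have hnhds : ∀ᶠ l in nhds lam, l ∈ U := hU.mem_nhds hlam
  have hLd : fderiv ℝ (fun l => τ l d) lam = 0 := by
    have hconst : (fun l => τ l d) =ᶠ[nhds lam] fun _ => 0 := hnhds.mono hτd
    rw [hconst.fderiv_eq, fderiv_const_apply]
  have hL : ∀ i ≠ d, ∀ u, fderiv ℝ (fun l => τ l i) lam u = ∑ a,
      Dphi i (arcDelay head τ lam) a * (u a + fderiv ℝ (fun l => τ l (head a)) lam u) :=
    fun i hi => fderiv_apply_eq_of_eventuallyEq_comp_arcDelay hτdiff (hderiv i hi)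
      (hnhds.mono fun l hl => hτeq l hl i hi)
  refine (hF.comp_hasFDerivAt lam ((hτdiff s).hasFDerivAt.sub_const τ0)).congr_fderiv ?_
  ext u
  simpa using mul_apply_eq_sum_arcFlow_mul hinv hDzero
    (x := fun i => fderiv ℝ (fun l => τ l i) lam u) (by simp [hLd]) (fun i hi => hL i hi u) s f

end Calculus

end DPSensitivity

end

open Filter intervalIntegral

open DPSensitivity

theorem stmt14_general {N A K : Type} [Fintype N] [Fintype A] [Fintype K] [DecidableEq N]
    (tail head : A → N) (src dst : K → N)
    (phi : K → N → (A → ℝ) → ℝ) (Dphi : K → N → (A → ℝ) → A → ℝ)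
    -- φ_i^k continuously differentiable, with partial derivatives `Dphi k i`
    (hderiv : ∀ k i, i ≠ dst k → ∀ z : A → ℝ,
      HasFDerivAt (phi k i)
        (∑ a, Dphi k i z a • (ContinuousLinearMap.proj a : (A → ℝ) →L[ℝ] ℝ)) z)
    (hDzero : ∀ k i, i ≠ dst k → ∀ (z : A → ℝ) a, tail a ≠ i → Dphi k i z a = 0)
    -- link latency functions s_a : [0, c_a) → [λ⁰_a, ∞), with inverses s_a⁻¹
    (lam0 : A → ℝ) (sInv : A → ℝ → ℝ)
    (hsInvc : ∀ a, ContinuousOn (sInv a) (Set.Ici (lam0 a)))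
    -- rate functions f_k and their primitives F_k
    (f : K → ℝ → ℝ) (F : K → ℝ → ℝ)
    (hF : ∀ k, ∀ q : ℝ, 0 < q → HasDerivAt (F k) (f k q) q)
    -- the open domain U
    (U : Set (A → ℝ)) (hU : IsOpen U)
    (hUsub : U ⊆ {lam : A → ℝ | ∀ a, lam0 a < lam a})
    -- τ^k solves the dynamic programming system on U and is differentiable
    (τ : K → (A → ℝ) → N → ℝ)
    (hτdiff : ∀ k, ∀ lam ∈ U, ∀ i, DifferentiableAt ℝ (fun l => τ k l i) lam)
    (hτd : ∀ k, ∀ lam ∈ U, τ k lam (dst k) = 0)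
    (hτeq : ∀ k, ∀ lam ∈ U, ∀ i, i ≠ dst k →
      τ k lam i = phi k i (fun a => lam a + τ k lam (head a)))
    -- invertibility of I − P̂^k(z^k(λ)) on U
    (hinv : ∀ k, ∀ lam ∈ U,
      IsUnit ((1 : Matrix {i : N // i ≠ dst k} {i : N // i ≠ dst k} ℝ) -
        Matrix.of (fun i j : {i : N // i ≠ dst k} =>
          ∑ a ∈ Finset.univ.filter (fun a => tail a = i.1 ∧ head a = j.1),
            Dphi k i.1 (fun b => lam b + τ k lam (head b)) a)))
    -- queuing delays are positive on U
    (τ0 : K → ℝ)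
    (hqpos : ∀ k, ∀ lam ∈ U, 0 < τ k lam (src k) - τ0 k) :
    -- definitions of z^k, q^k, x̃^k, P̂^k, y^k, v^k, w̃ and Φ
    let zf : K → (A → ℝ) → A → ℝ := fun k lam a => lam a + τ k lam (head a)
    let qk : K → (A → ℝ) → ℝ := fun k lam => τ k lam (src k) - τ0 k
    let xt : K → (A → ℝ) → ℝ := fun k lam => f k (qk k lam)
    let Phat : (k : K) → (A → ℝ) →
        Matrix {i : N // i ≠ dst k} {i : N // i ≠ dst k} ℝ := fun k lam =>
      Matrix.of fun i j =>
        ∑ a ∈ Finset.univ.filter (fun a => tail a = i.1 ∧ head a = j.1),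
          Dphi k i.1 (zf k lam) a
    let y : (k : K) → (A → ℝ) → {i : N // i ≠ dst k} → ℝ := fun k lam =>
      ((1 - (Phat k lam).transpose)⁻¹).mulVec
        (fun i => if i.1 = src k then xt k lam else 0)
    let v : K → (A → ℝ) → A → ℝ := fun k lam a =>
      if h : tail a ≠ dst k then
        y k lam ⟨tail a, h⟩ * Dphi k (tail a) (zf k lam) a
      else 0
    let wt : (A → ℝ) → A → ℝ := fun lam a => ∑ k, v k lam a
    let Φ : (A → ℝ) → ℝ := fun lam =>
      (∑ a, ∫ z in lam0 a..lam a, sInv a z) - ∑ k, F k (qk k lam)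
    -- conclusion: Φ is differentiable with ∂Φ/∂λ_a = s_a⁻¹(λ_a) − w̃_a(λ),
    -- and its critical points are exactly the solutions of (R-MNUM)
    (∀ lam ∈ U, HasFDerivAt Φ
        (∑ a, (sInv a (lam a) - wt lam a) •
          (ContinuousLinearMap.proj a : (A → ℝ) →L[ℝ] ℝ)) lam) ∧
    (∀ lam ∈ U, (fderiv ℝ Φ lam = 0 ↔ ∀ a, sInv a (lam a) = wt lam a)) := by
  intro zf qk xt Phat y v wt Φ
  have hgrad : ∀ lam ∈ U, HasFDerivAt Φ
      (∑ a, (sInv a (lam a) - wt lam a) •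
        (ContinuousLinearMap.proj a : (A → ℝ) →L[ℝ] ℝ)) lam := by
    intro lam hlam
    have hqueue : ∀ k, HasFDerivAt (fun l => F k (qk k l))
        (∑ a, v k lam a • (ContinuousLinearMap.proj a : (A → ℝ) →L[ℝ] ℝ)) lam := fun k =>
      hasFDerivAt_comp_queueDelay hU hlam (hτdiff k lam hlam) (hτd k) (hτeq k)
        (fun i hi => hderiv k i hi _) (fun i hi => hDzero k i hi _) (hinv k lam hlam)
        (hF k _ (hqpos k lam hlam))
    refine ((hasFDerivAt_sum_integral hsInvc (hUsub hlam)).sub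
      (HasFDerivAt.fun_sum fun k _ => hqueue k)).congr_fderiv ?_
    ext u
    simp only [wt, _root_.sub_apply, _root_.sum_apply, _root_.smul_apply,
      ContinuousLinearMap.proj_apply, smul_eq_mul, sub_mul, sum_mul, sum_sub_distrib]
    rw [sum_comm]
  refine ⟨hgrad, fun lam hlam => ?_⟩
  rw [(hgrad lam hlam).fderiv, sum_smul_proj_eq_zero_iff]
  simp only [sub_eq_zero]

/-- gradient of the objective
`Φ(λ) = Σ_a ∫_{λ⁰_a}^{λ_a} s_a⁻¹(z) dz − Σ_k F_k(q^k(λ))` of (D-MNUM):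
`∂Φ/∂λ_a(λ) = s_a⁻¹(λ_a) − w̃_a(λ)`, so that `∇Φ(λ*) = 0` iff
`s_a⁻¹(λ*_a) = w̃_a(λ*)` for every arc `a`. -/
theorem stmt14 {N A K : Type} [Fintype N] [Fintype A] [Fintype K]
    [DecidableEq N] [DecidableEq A]
    (tail head : A → N) (src dst : K → N)
    (phi : K → N → (A → ℝ) → ℝ) (Dphi : K → N → (A → ℝ) → A → ℝ)
    (hdep : ∀ k i, i ≠ dst k → ∀ z z' : A → ℝ,
      (∀ a, tail a = i → z a = z' a) → phi k i z = phi k i z')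
    (hconc : ∀ k i, i ≠ dst k → ConcaveOn ℝ Set.univ (phi k i))
    (hmono : ∀ k i, i ≠ dst k → Monotone (phi k i))
    -- φ_i^k continuously differentiable, with partial derivatives `Dphi k i`
    (hderiv : ∀ k i, i ≠ dst k → ∀ z : A → ℝ,
      HasFDerivAt (phi k i)
        (∑ a, Dphi k i z a • (ContinuousLinearMap.proj a : (A → ℝ) →L[ℝ] ℝ)) z)
    (hDcont : ∀ k i, i ≠ dst k → Continuous (fun z : A → ℝ => Dphi k i z))
    (hDnn : ∀ k i, i ≠ dst k → ∀ z a, 0 ≤ Dphi k i z a)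
    (hDzero : ∀ k i, i ≠ dst k → ∀ (z : A → ℝ) a, tail a ≠ i → Dphi k i z a = 0)
    (hDsum : ∀ k i, i ≠ dst k → ∀ z : A → ℝ,
      ∑ a ∈ Finset.univ.filter (fun a => tail a = i), Dphi k i z a = 1)
    -- link latency functions s_a : [0, c_a) → [λ⁰_a, ∞), with inverses s_a⁻¹
    (lam0 : A → ℝ) (hlam0 : ∀ a, 0 ≤ lam0 a)
    (c : A → EReal) (hc : ∀ a, 0 < c a)
    (s : A → ℝ → ℝ) (sInv : A → ℝ → ℝ)
    (hsmono : ∀ a, StrictMonoOn (s a) {w : ℝ | 0 ≤ w ∧ (w : EReal) < c a})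
    (hs0 : ∀ a, s a 0 = lam0 a)
    (hssurj : ∀ a, s a '' {w : ℝ | 0 ≤ w ∧ (w : EReal) < c a} = Set.Ici (lam0 a))
    (hsInv : ∀ a, ∀ w : ℝ, 0 ≤ w → (w : EReal) < c a → sInv a (s a w) = w)
    (hsInv' : ∀ a, ∀ y : ℝ, lam0 a ≤ y →
      s a (sInv a y) = y ∧ 0 ≤ sInv a y ∧ (sInv a y : EReal) < c a)
    (hsInvc : ∀ a, ContinuousOn (sInv a) (Set.Ici (lam0 a)))
    -- rate functions f_k and their primitives F_k
    (f : K → ℝ → ℝ)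
    (hfpos : ∀ k, ∀ q : ℝ, 0 < q → 0 < f k q)
    (hfc : ∀ k, ContinuousOn (f k) (Set.Ioi 0))
    (hfm : ∀ k, StrictAntiOn (f k) (Set.Ioi 0))
    (F : K → ℝ → ℝ)
    (hF : ∀ k, ∀ q : ℝ, 0 < q → HasDerivAt (F k) (f k q) q)
    -- the open domain U
    (U : Set (A → ℝ)) (hU : IsOpen U)
    (hUsub : U ⊆ {lam : A → ℝ | ∀ a, lam0 a < lam a})
    -- τ^k solves the dynamic programming system on U and is differentiable
    (τ : K → (A → ℝ) → N → ℝ)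
    (hτdiff : ∀ k, ∀ lam ∈ U, ∀ i, DifferentiableAt ℝ (fun l => τ k l i) lam)
    (hτd : ∀ k, ∀ lam ∈ U, τ k lam (dst k) = 0)
    (hτeq : ∀ k, ∀ lam ∈ U, ∀ i, i ≠ dst k →
      τ k lam i = phi k i (fun a => lam a + τ k lam (head a)))
    -- invertibility of I − P̂^k(z^k(λ)) on U
    (hinv : ∀ k, ∀ lam ∈ U,
      IsUnit ((1 : Matrix {i : N // i ≠ dst k} {i : N // i ≠ dst k} ℝ) -
        Matrix.of (fun i j : {i : N // i ≠ dst k} =>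
          ∑ a ∈ Finset.univ.filter (fun a => tail a = i.1 ∧ head a = j.1),
            Dphi k i.1 (fun b => lam b + τ k lam (head b)) a)))
    -- queuing delays are positive on U
    (τ0 : K → ℝ)
    (hqpos : ∀ k, ∀ lam ∈ U, 0 < τ k lam (src k) - τ0 k) :
    -- definitions of z^k, q^k, x̃^k, P̂^k, y^k, v^k, w̃ and Φ
    let zf : K → (A → ℝ) → A → ℝ := fun k lam a => lam a + τ k lam (head a)
    let qk : K → (A → ℝ) → ℝ := fun k lam => τ k lam (src k) - τ0 k
    let xt : K → (A → ℝ) → ℝ := fun k lam => f k (qk k lam)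
    let Phat : (k : K) → (A → ℝ) →
        Matrix {i : N // i ≠ dst k} {i : N // i ≠ dst k} ℝ := fun k lam =>
      Matrix.of fun i j =>
        ∑ a ∈ Finset.univ.filter (fun a => tail a = i.1 ∧ head a = j.1),
          Dphi k i.1 (zf k lam) a
    let y : (k : K) → (A → ℝ) → {i : N // i ≠ dst k} → ℝ := fun k lam =>
      ((1 - (Phat k lam).transpose)⁻¹).mulVec
        (fun i => if i.1 = src k then xt k lam else 0)
    let v : K → (A → ℝ) → A → ℝ := fun k lam a =>
      if h : tail a ≠ dst k then
        y k lam ⟨tail a, h⟩ * Dphi k (tail a) (zf k lam) a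
      else 0
    let wt : (A → ℝ) → A → ℝ := fun lam a => ∑ k, v k lam a
    let Φ : (A → ℝ) → ℝ := fun lam =>
      (∑ a, ∫ z in lam0 a..lam a, sInv a z) - ∑ k, F k (qk k lam)
    -- conclusion: Φ is differentiable with ∂Φ/∂λ_a = s_a⁻¹(λ_a) − w̃_a(λ),
    -- and its critical points are exactly the solutions of (R-MNUM)
    (∀ lam ∈ U, HasFDerivAt Φ
        (∑ a, (sInv a (lam a) - wt lam a) •
          (ContinuousLinearMap.proj a : (A → ℝ) →L[ℝ] ℝ)) lam) ∧
    (∀ lam ∈ U, (fderiv ℝ Φ lam = 0 ↔ ∀ a, sInv a (lam a) = wt lam a)) :=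
  stmt14_general tail head src dst phi Dphi hderiv hDzero lam0 sInv hsInvc f F hF U hU hUsub τ
    hτdiff hτd hτeq hinv τ0 hqpos
end

section
/- Let A and K be nonempty finite sets and λ⁰ ∈ ℝ^A. For each a ∈ A let g_a : ℝ → [0, ∞) be nondecreasing with g_a(z) = 0 for all z ≤ λ_a⁰. For each k ∈ K let F_k : ℝ → ℝ be nondecreasing and q^k : ℝ^A → ℝ be componentwise nondecreasing. Define Φ(λ) = Σ_{a∈A} ∫_{λ_a⁰}^{λ_a} g_a(z) dz − Σ_{k∈K} F_k(q^k(λ)). Then Φ(λ ∨ λ⁰) ≤ Φ(λ) for every λ ∈ ℝ^A, where (λ ∨ λ⁰)_a = max(λ_a, λ_a⁰). -/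
open intervalIntegral

theorem intervalIntegral.integral_max_eq_of_eqOn_Iic {E : Type*} [NormedAddCommGroup E]
    [NormedSpace ℝ E] {f : ℝ → E} {c : ℝ} (hf : Set.EqOn f 0 (Set.Iic c)) (x : ℝ) :
    ∫ z in c..max x c, f z = ∫ z in c..x, f z := by
  rcases le_total c x with hcx | hxc
  · rw [max_eq_left hcx]
  · have hvanish : Set.EqOn f 0 (Set.uIcc c x) := by
      rw [Set.uIcc_of_ge hxc]
      exact hf.mono fun z hz => hz.2
    rw [max_eq_right hxc, integral_same, integral_congr hvanish, Pi.zero_def, integral_zero]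

theorem stmt17_general {A : Type} [Fintype A]
    {K : Type} [Fintype K]
    (lam0 : A → ℝ)
    (g : A → ℝ → ℝ)
    (hg0 : ∀ a z, z ≤ lam0 a → g a z = 0)
    (F : K → ℝ → ℝ) (hF : ∀ k, Monotone (F k))
    (q : K → (A → ℝ) → ℝ) (hq : ∀ k, Monotone (q k)) :
    ∀ lam : A → ℝ,
      ((∑ a, ∫ z in lam0 a..(max (lam a) (lam0 a)), g a z) -
          ∑ k, F k (q k (fun a => max (lam a) (lam0 a)))) ≤
        (∑ a, ∫ z in lam0 a..lam a, g a z) - ∑ k, F k (q k lam) := by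
  intro lam
  have hintegrals :
      ∀ a, ∫ z in lam0 a..max (lam a) (lam0 a), g a z = ∫ z in lam0 a..lam a, g a z :=
    fun a => integral_max_eq_of_eqOn_Iic (fun z hz => hg0 a z hz) (lam a)
  have hle : lam ≤ fun a => max (lam a) (lam0 a) := fun a => le_max_left _ _
  simp only [hintegrals]
  exact sub_le_sub_left (Finset.sum_le_sum fun k _ => hF k (hq k hle)) _

/-- with `g_a ≥ 0` nondecreasing and vanishing below `λ⁰_a`, `F_k`
nondecreasing and `q^k` componentwise nondecreasing, the function
`Φ(λ) = Σ_a ∫_{λ⁰_a}^{λ_a} g_a(z) dz − Σ_k F_k(q^k(λ))` satisfies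
`Φ(λ ∨ λ⁰) ≤ Φ(λ)` for every `λ`. -/
theorem stmt17 {A : Type} [Fintype A] [Nonempty A]
    {K : Type} [Fintype K] [Nonempty K]
    (lam0 : A → ℝ)
    (g : A → ℝ → ℝ)
    (hgnn : ∀ a z, 0 ≤ g a z)
    (hgm : ∀ a, Monotone (g a))
    (hg0 : ∀ a z, z ≤ lam0 a → g a z = 0)
    (F : K → ℝ → ℝ) (hF : ∀ k, Monotone (F k))
    (q : K → (A → ℝ) → ℝ) (hq : ∀ k, Monotone (q k)) :
    ∀ lam : A → ℝ,
      ((∑ a, ∫ z in lam0 a..(max (lam a) (lam0 a)), g a z) -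
          ∑ k, F k (q k (fun a => max (lam a) (lam0 a)))) ≤
        (∑ a, ∫ z in lam0 a..lam a, g a z) - ∑ k, F k (q k lam) :=
  stmt17_general lam0 g hg0 F hF q hq
end

section
/- A vector x* with x*^k ∈ I_k for every k satisfies the equilibrium equations f_k^{-1}(x*^k) = Σ_{a∈A_k} ψ_a(Σ_{s∈K : a∈A_s} x*^s) for every source k ∈ K if and only if x* is a global minimizer over the open set Π_{k∈K} I_k of the function J(x) = Σ_{a∈A} Ψ_a(Σ_{s∈K : a∈A_s} x^s) − Σ_{k∈K} U_k(x^k); moreover J is strictly convex on Π_{k∈K} I_k, so such a minimizer is unique. -/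
/-!
Write `J(x) = Σ_a Ψ_a(w_a(x)) − Σ_k U_k(x^k)`, where the link flows `w_a` are linear in `x`.
Each `Ψ_a` is convex because `ψ_a` is increasing, and each `U_k` is strictly concave because
its derivative `f_k⁻¹` is strictly decreasing; hence `J` is strictly convex on the open convex box
`Π_k I_k`. The derivative of `J` at `x` in the direction `v` is
`Σ_k (Σ_{a ∈ A_k} ψ_a(w_a(x)) − f_k⁻¹(x^k)) v^k`. At an interior minimizer it vanishes along every
coordinate direction, which gives the equilibrium equations; conversely, if every coefficient
vanishes, the tangent-line inequality of the convex function `J` along the segment to any `y`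
gives `J(x) ≤ J(y)`.
-/

open Filter intervalIntegral

/-- The objective function of the (NUM) problem:
`J(x) = Σ_a Ψ_a(Σ_{s : a ∈ A_s} x^s) − Σ_k U_k(x^k)` where
`Ψ_a(w) = ∫_0^w ψ_a(z) dz`. -/
noncomputable def NUMobj {A K : Type} [Fintype A] [Fintype K] [DecidableEq A]
    (Ak : K → Finset A) (ψ : A → ℝ → ℝ) (U : K → ℝ → ℝ) (x : K → ℝ) : ℝ :=
  (∑ a, ∫ z in (0:ℝ)..(∑ s ∈ Finset.univ.filter (fun s => a ∈ Ak s), x s), ψ a z)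
    - ∑ k, U k (x k)

open Set Topology

theorem convexOn_finset_sum {𝕜 E β ι : Type*} [Semiring 𝕜] [PartialOrder 𝕜]
    [AddCommMonoid E] [AddCommMonoid β] [PartialOrder β] [IsOrderedAddMonoid β]
    [SMul 𝕜 E] [Module 𝕜 β] {s : Set E} (hs : Convex 𝕜 s) {f : ι → E → β} (t : Finset ι)
    (hf : ∀ i ∈ t, ConvexOn 𝕜 s (f i)) : ConvexOn 𝕜 s (fun x => ∑ i ∈ t, f i x) := by
  classical
  induction t using Finset.induction_on with
  | empty => simpa using convexOn_const 0 hs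
  | insert i t hi ih =>
    simp_rw [Finset.sum_insert hi]
    exact (hf i (t.mem_insert_self i)).add (ih fun j hj => hf j (Finset.mem_insert_of_mem hj))

theorem strictConcaveOn_univ_pi_sum {ι : Type*} [Fintype ι] {I : ι → Set ℝ} {g : ι → ℝ → ℝ}
    (hg : ∀ i, StrictConcaveOn ℝ (I i) (g i)) :
    StrictConcaveOn ℝ (univ.pi I) (fun x => ∑ i, g i (x i)) := by
  refine ⟨convex_pi fun i _ => (hg i).1, fun x hx y hy hxy p q hp hq hpq => ?_⟩
  obtain ⟨i₀, hi₀⟩ := Function.ne_iff.mp hxy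
  simp only [smul_eq_mul, Finset.mul_sum, ← Finset.sum_add_distrib, Pi.add_apply, Pi.smul_apply]
  exact Finset.sum_lt_sum
    (fun i _ => (hg i).concaveOn.2 (hx i trivial) (hy i trivial) hp.le hq.le hpq)
    ⟨i₀, Finset.mem_univ _, (hg i₀).2 (hx i₀ trivial) (hy i₀ trivial) hi₀ hp hq hpq⟩

theorem ConvexOn.le_sub_of_hasDerivAt_line {E : Type*} [AddCommGroup E] [Module ℝ E]
    {s : Set E} {J : E → ℝ} (hJ : ConvexOn ℝ s J) {x y : E} (hx : x ∈ s) (hy : y ∈ s)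
    {D : ℝ} (hD : HasDerivAt (fun t : ℝ => J (x + t • (y - x))) D 0) : D ≤ J y - J x := by
  have hline : (fun t : ℝ => J (x + t • (y - x))) = J ∘ AffineMap.lineMap x y := by
    funext t
    simp [AffineMap.lineMap_apply_module', add_comm]
  have hconv : ConvexOn ℝ (Icc 0 1) (fun t : ℝ => J (x + t • (y - x))) :=
    hline ▸ (hJ.comp_affineMap (AffineMap.lineMap x y)).subset
      (fun t ht => hJ.1.lineMap_mem hx hy ht) (convex_Icc 0 1)
  simpa [slope_def_field] using
    hconv.le_slope_of_hasDerivAt (by simp) (by simp) zero_lt_one hD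

theorem strictConcaveOn_of_hasDerivAt {D : Set ℝ} (hD : Convex ℝ D) (hDo : IsOpen D)
    {f f' : ℝ → ℝ} (hf : ∀ x ∈ D, HasDerivAt f (f' x) x) (hf' : StrictAntiOn f' D) :
    StrictConcaveOn ℝ D f := by
  refine StrictAntiOn.strictConcaveOn_of_deriv hD
    (fun x hx => (hf x hx).continuousAt.continuousWithinAt) ?_
  rw [hDo.interior_eq]
  exact hf'.congr fun x hx => ((hf x hx).deriv).symm

theorem convexOn_primitive {g : ℝ → ℝ} (hc : Continuous g) (hm : Monotone g) :
    ConvexOn ℝ univ (fun w => ∫ z in (0:ℝ)..w, g z) := by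
  have hderiv : ∀ w, HasDerivAt (fun w => ∫ z in (0:ℝ)..w, g z) (g w) w :=
    fun w => (hc.integral_hasStrictDerivAt 0 w).hasDerivAt
  refine Monotone.convexOn_univ_of_deriv (fun w => (hderiv w).differentiableAt) ?_
  rwa [funext fun w => (hderiv w).deriv]

theorem StrictAntiOn.isOpen_image {s : Set ℝ} {f : ℝ → ℝ} (hf : StrictAntiOn f s)
    (hs : IsOpen s) (hc : ContinuousOn f s) : IsOpen (f '' s) := by
  refine isOpen_iff_mem_nhds.2 ?_
  rintro _ ⟨q, hq, rfl⟩
  obtain ⟨ε, hε, hball⟩ := Metric.isOpen_iff.1 hs q hq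
  have hsub : Icc (q - ε / 2) (q + ε / 2) ⊆ s := fun z hz =>
    hball (by rw [Metric.mem_ball, Real.dist_eq, abs_lt]; constructor <;> linarith [hz.1, hz.2])
  have himage := ContinuousOn.image_Ioo_of_strictAntiOn (by linarith) (hc.mono hsub)
    (hf.mono hsub)
  refine mem_of_superset (Ioo_mem_nhds ?_ ?_)
    (himage ▸ image_mono (Ioo_subset_Icc_self.trans hsub))
  · exact hf hq (hsub ⟨by linarith, by linarith⟩) (by linarith)
  · exact hf (hsub ⟨by linarith, by linarith⟩) hq (by linarith)

theorem StrictAntiOn.strictAntiOn_image_of_leftInvOn {α β : Type*} [LinearOrder α]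
    [Preorder β] {f : α → β} {g : β → α} {s : Set α} (hf : StrictAntiOn f s)
    (hg : LeftInvOn g f s) : StrictAntiOn g (f '' s) := by
  rintro _ ⟨p, hp, rfl⟩ _ ⟨q, hq, rfl⟩ hpq
  rw [hg hp, hg hq]
  exact (hf.lt_iff_gt hp hq).1 hpq

theorem ContinuousOn.comp_max_zero {g : ℝ → ℝ} (hg : ContinuousOn g (Ici 0)) :
    Continuous fun z => g (max z 0) :=
  hg.comp_continuous (continuous_id.max continuous_const) fun z => le_max_right z 0

theorem MonotoneOn.comp_max_zero {g : ℝ → ℝ} (hg : MonotoneOn g (Ici 0)) :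
    Monotone fun z => g (max z 0) := fun _ _ h =>
  hg (mem_Ici.2 (le_max_right _ 0)) (mem_Ici.2 (le_max_right _ 0)) (max_le_max h le_rfl)

namespace NUM

variable {A K : Type*} [Fintype K] [DecidableEq A] (Ak : K → Finset A)

noncomputable def linkFlow (a : A) : (K → ℝ) →ₗ[ℝ] ℝ :=
  ∑ s ∈ Finset.univ.filter (fun s => a ∈ Ak s), LinearMap.proj s

theorem linkFlow_apply (a : A) (x : K → ℝ) :
    linkFlow Ak a x = ∑ s ∈ Finset.univ.filter (fun s => a ∈ Ak s), x s := by
  simp [linkFlow]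

theorem linkFlow_nonneg {x : K → ℝ} (hx : 0 ≤ x) (a : A) : 0 ≤ linkFlow Ak a x := by
  rw [linkFlow_apply]
  exact Finset.sum_nonneg fun s _ => hx s

variable [Fintype A]

theorem sum_mul_linkFlow (c : A → ℝ) (v : K → ℝ) :
    ∑ a, c a * linkFlow Ak a v = ∑ k, (∑ a ∈ Ak k, c a) * v k := by
  simp_rw [linkFlow_apply, Finset.mul_sum, Finset.sum_filter, Finset.sum_mul]
  rw [Finset.sum_comm]
  simp [Finset.sum_ite_mem]

noncomputable def objective (Φ : A → ℝ → ℝ) (U : K → ℝ → ℝ) (x : K → ℝ) : ℝ :=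
  ∑ a, Φ a (linkFlow Ak a x) - ∑ k, U k (x k)

variable {Ak} {Φ φ : A → ℝ → ℝ} {U u : K → ℝ → ℝ}

theorem hasDerivAt_objective_line {x : K → ℝ}
    (hΦ : ∀ a, HasDerivAt (Φ a) (φ a (linkFlow Ak a x)) (linkFlow Ak a x))
    (hU : ∀ k, HasDerivAt (U k) (u k (x k)) (x k)) (v : K → ℝ) :
    HasDerivAt (fun t : ℝ => objective Ak Φ U (x + t • v))
      (∑ k, (∑ a ∈ Ak k, φ a (linkFlow Ak a x) - u k (x k)) * v k) 0 := by
  have hline : ∀ c d : ℝ, HasDerivAt (fun t : ℝ => c + t * d) d 0 := fun c d => by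
    simpa using ((hasDerivAt_id (0 : ℝ)).mul_const d).const_add c
  have hlinks : HasDerivAt (fun t : ℝ => ∑ a, Φ a (linkFlow Ak a x + t * linkFlow Ak a v))
      (∑ a, φ a (linkFlow Ak a x) * linkFlow Ak a v) 0 :=
    HasDerivAt.fun_sum fun a _ => (hΦ a).comp_of_eq 0 (hline _ _) (by simp)
  have hsources : HasDerivAt (fun t : ℝ => ∑ k, U k (x k + t * v k))
      (∑ k, u k (x k) * v k) 0 :=
    HasDerivAt.fun_sum fun k _ => (hU k).comp_of_eq 0 (hline _ _) (by simp)
  have hfun : (fun t : ℝ => objective Ak Φ U (x + t • v)) = fun t =>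
      (∑ a, Φ a (linkFlow Ak a x + t * linkFlow Ak a v)) - ∑ k, U k (x k + t * v k) := by
    funext t
    simp [objective]
  have hgrad : ∑ k, (∑ a ∈ Ak k, φ a (linkFlow Ak a x) - u k (x k)) * v k =
      ∑ a, φ a (linkFlow Ak a x) * linkFlow Ak a v - ∑ k, u k (x k) * v k := by
    simp only [sub_mul, Finset.sum_sub_distrib, sum_mul_linkFlow]
  rw [hfun, hgrad]
  exact hlinks.sub hsources

variable {I : K → Set ℝ}

theorem objective_strictConvexOn (hΦ : ∀ a, ConvexOn ℝ univ (Φ a))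
    (hU : ∀ k, StrictConcaveOn ℝ (I k) (U k)) :
    StrictConvexOn ℝ (univ.pi I) (objective Ak Φ U) :=
  ((convexOn_finset_sum convex_univ Finset.univ fun a _ =>
      (hΦ a).comp_linearMap (linkFlow Ak a)).subset (subset_univ _)
    (convex_pi fun k _ => (hU k).1)).sub_strictConcaveOn (strictConcaveOn_univ_pi_sum hU)

theorem isMinOn_objective_iff (hJ : ConvexOn ℝ (univ.pi I) (objective Ak Φ U))
    (hΦ : ∀ a w, HasDerivAt (Φ a) (φ a w) w) (hU : ∀ k, ∀ y ∈ I k, HasDerivAt (U k) (u k y) y)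
    (hI : ∀ k, IsOpen (I k)) {x : K → ℝ} (hx : x ∈ univ.pi I) :
    IsMinOn (objective Ak Φ U) (univ.pi I) x ↔
      ∀ k, u k (x k) = ∑ a ∈ Ak k, φ a (linkFlow Ak a x) := by
  classical
  have hderiv := hasDerivAt_objective_line (Ak := Ak) (fun a => hΦ a _)
    (fun k => hU k _ (hx k trivial))
  constructor
  · intro hmin k
    have hnear : ∀ᶠ t in 𝓝 (0 : ℝ), x + t • Pi.single k 1 ∈ univ.pi I := by
      have hcont : ContinuousAt (fun t : ℝ => x + t • Pi.single k (1 : ℝ)) 0 := by fun_prop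
      refine hcont.preimage_mem_nhds ?_
      rw [zero_smul, add_zero]
      exact (isOpen_set_pi finite_univ fun k _ => hI k).mem_nhds hx
    have hloc : IsLocalMin (fun t : ℝ => objective Ak Φ U (x + t • Pi.single k 1)) 0 := by
      filter_upwards [hnear] with t ht
      simpa using hmin ht
    have hzero := hloc.hasDerivAt_eq_zero (hderiv (Pi.single k 1))
    simp only [Pi.single_apply, mul_ite, mul_one, mul_zero, Finset.sum_ite_eq',
      Finset.mem_univ, if_true] at hzero
    linarith
  · intro hequilibrium
    refine isMinOn_iff.2 fun y hy => ?_
    have htangent := hJ.le_sub_of_hasDerivAt_line hx hy (hderiv (y - x))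
    simp only [hequilibrium, sub_self, zero_mul, Finset.sum_const_zero] at htangent
    linarith

end NUM

section NUMobj

variable {A K : Type} [Fintype A] [Fintype K] [DecidableEq A] {Ak : K → Finset A}
  {ψ : A → ℝ → ℝ} {U u : K → ℝ → ℝ} {I : K → Set ℝ}

/- On nonnegative rates every link flow is nonnegative, so `Ψ_a` may be computed from the
extension `z ↦ ψ_a (max z 0)`, which is continuous and monotone on all of `ℝ`. -/
theorem NUMobj_eq_objective {x : K → ℝ} (hx : 0 ≤ x) :
    NUMobj Ak ψ U x = NUM.objective Ak (fun a w => ∫ z in (0:ℝ)..w, ψ a (max z 0)) U x := by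
  unfold NUMobj NUM.objective
  congr 1
  refine Finset.sum_congr rfl fun a _ => ?_
  rw [← NUM.linkFlow_apply]
  refine integral_congr fun z hz => ?_
  rw [uIcc_of_le (NUM.linkFlow_nonneg Ak hx a)] at hz
  simp [max_eq_left hz.1]

theorem NUMobj_strictConvexOn (hψc : ∀ a, ContinuousOn (ψ a) (Ici 0))
    (hψm : ∀ a, MonotoneOn (ψ a) (Ici 0)) (hI : ∀ k, Convex ℝ (I k))
    (hIo : ∀ k, IsOpen (I k)) (hI0 : ∀ k, I k ⊆ Ici 0)
    (hU : ∀ k, ∀ y ∈ I k, HasDerivAt (U k) (u k y) y) (hu : ∀ k, StrictAntiOn (u k) (I k)) :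
    StrictConvexOn ℝ (univ.pi I) (NUMobj Ak ψ U) := by
  refine (NUM.objective_strictConvexOn (Ak := Ak)
    (fun a => convexOn_primitive (hψc a).comp_max_zero (hψm a).comp_max_zero)
    (fun k => strictConcaveOn_of_hasDerivAt (hI k) (hIo k) (hU k) (hu k))).congr ?_
  exact fun x hx => (NUMobj_eq_objective fun k => hI0 k (hx k trivial)).symm

theorem isMinOn_NUMobj_iff (hψc : ∀ a, ContinuousOn (ψ a) (Ici 0))
    (hJ : ConvexOn ℝ (univ.pi I) (NUMobj Ak ψ U)) (hIo : ∀ k, IsOpen (I k))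
    (hI0 : ∀ k, I k ⊆ Ici 0) (hU : ∀ k, ∀ y ∈ I k, HasDerivAt (U k) (u k y) y)
    {x : K → ℝ} (hx : x ∈ univ.pi I) :
    IsMinOn (NUMobj Ak ψ U) (univ.pi I) x ↔
      ∀ k, u k (x k) = ∑ a ∈ Ak k, ψ a (∑ s ∈ Finset.univ.filter (fun s => a ∈ Ak s), x s) := by
  have hnonneg : ∀ y ∈ univ.pi I, 0 ≤ y := fun y hy k => hI0 k (hy k trivial)
  have hEq : EqOn (NUMobj Ak ψ U)
      (NUM.objective Ak (fun a w => ∫ z in (0:ℝ)..w, ψ a (max z 0)) U) (univ.pi I) :=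
    fun y hy => NUMobj_eq_objective (hnonneg y hy)
  have hmin : IsMinOn (NUMobj Ak ψ U) (univ.pi I) x ↔
      IsMinOn (NUM.objective Ak (fun a w => ∫ z in (0:ℝ)..w, ψ a (max z 0)) U) (univ.pi I) x := by
    simp only [isMinOn_iff]
    exact forall₂_congr fun y hy => by rw [hEq hx, hEq hy]
  have hflow : ∀ a, max (NUM.linkFlow Ak a x) 0 = NUM.linkFlow Ak a x :=
    fun a => max_eq_left (NUM.linkFlow_nonneg Ak (hnonneg x hx) a)
  rw [hmin, NUM.isMinOn_objective_iff (hJ.congr hEq)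
    (fun a w => ((hψc a).comp_max_zero.integral_hasStrictDerivAt 0 w).hasDerivAt) hU hIo hx]
  simp_rw [hflow, NUM.linkFlow_apply]

end NUMobj

theorem stmt19_general {A K : Type} [Fintype A] [Fintype K] [DecidableEq A]
    (Ak : K → Finset A)
    (ψ : A → ℝ → ℝ)
    (hψc : ∀ a, ContinuousOn (ψ a) (Set.Ici 0))
    (hψm : ∀ a, StrictMonoOn (ψ a) (Set.Ici 0))
    (f : K → ℝ → ℝ)
    (hfpos : ∀ k, ∀ q : ℝ, 0 < q → 0 < f k q)
    (hfc : ∀ k, ContinuousOn (f k) (Set.Ioi 0))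
    (hfm : ∀ k, StrictAntiOn (f k) (Set.Ioi 0))
    (finv : K → ℝ → ℝ)
    (hfinv : ∀ k, ∀ q : ℝ, 0 < q → finv k (f k q) = q)
    (U : K → ℝ → ℝ)
    (hU : ∀ k, ∀ y ∈ f k '' Set.Ioi (0:ℝ), HasDerivAt (U k) (finv k y) y)
    (xstar : K → ℝ) (hx : ∀ k, xstar k ∈ f k '' Set.Ioi (0:ℝ)) :
    ((∀ k, finv k (xstar k) =
        ∑ a ∈ Ak k, ψ a (∑ s ∈ Finset.univ.filter (fun s => a ∈ Ak s), xstar s)) ↔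
      (∀ y : K → ℝ, (∀ k, y k ∈ f k '' Set.Ioi (0:ℝ)) →
        NUMobj Ak ψ U xstar ≤ NUMobj Ak ψ U y)) ∧
    StrictConvexOn ℝ {x : K → ℝ | ∀ k, x k ∈ f k '' Set.Ioi (0:ℝ)}
      (NUMobj Ak ψ U) ∧
    (∀ x₁ x₂ : K → ℝ, (∀ k, x₁ k ∈ f k '' Set.Ioi (0:ℝ)) →
      (∀ k, x₂ k ∈ f k '' Set.Ioi (0:ℝ)) →
      (∀ y : K → ℝ, (∀ k, y k ∈ f k '' Set.Ioi (0:ℝ)) →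
        NUMobj Ak ψ U x₁ ≤ NUMobj Ak ψ U y) →
      (∀ y : K → ℝ, (∀ k, y k ∈ f k '' Set.Ioi (0:ℝ)) →
        NUMobj Ak ψ U x₂ ≤ NUMobj Ak ψ U y) →
      x₁ = x₂) := by
  set I : K → Set ℝ := fun k => f k '' Ioi 0
  have hIo : ∀ k, IsOpen (I k) := fun k => (hfm k).isOpen_image isOpen_Ioi (hfc k)
  have hI : ∀ k, Convex ℝ (I k) := fun k =>
    (isPreconnected_Ioi.image _ (hfc k)).ordConnected.convex
  have hI0 : ∀ k, I k ⊆ Ici 0 := by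
    rintro k _ ⟨q, hq, rfl⟩
    exact (hfpos k q hq).le
  have hfinv_anti : ∀ k, StrictAntiOn (finv k) (I k) := fun k =>
    (hfm k).strictAntiOn_image_of_leftInvOn (hfinv k)
  have hconvex : StrictConvexOn ℝ (univ.pi I) (NUMobj Ak ψ U) :=
    NUMobj_strictConvexOn hψc (fun a => (hψm a).monotoneOn) hI hIo hI0 hU hfinv_anti
  have hpi : {x : K → ℝ | ∀ k, x k ∈ I k} = univ.pi I := by ext; simp
  have hmin : ∀ x : K → ℝ, (∀ y : K → ℝ, (∀ k, y k ∈ I k) →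
      NUMobj Ak ψ U x ≤ NUMobj Ak ψ U y) ↔ IsMinOn (NUMobj Ak ψ U) (univ.pi I) x := by
    simp [isMinOn_iff]
  refine ⟨?_, hpi ▸ hconvex, fun x₁ x₂ hx₁ hx₂ hmin₁ hmin₂ => ?_⟩
  · rw [hmin, isMinOn_NUMobj_iff hψc hconvex.convexOn hIo hI0 hU fun k _ => hx k]
  · exact hconvex.eq_of_isMinOn ((hmin x₁).1 hmin₁) ((hmin x₂).1 hmin₂)
      (fun k _ => hx₁ k) (fun k _ => hx₂ k)

/-- `x*` (with `x*^k ∈ I_k`) satisfies the equilibrium equations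
`f_k⁻¹(x*^k) = Σ_{a∈A_k} ψ_a(Σ_{s : a∈A_s} x*^s)` iff `x*` is a global minimizer
of `J` over the open set `Π_k I_k`; moreover `J` is strictly convex on `Π_k I_k`,
so such a minimizer is unique. Here `I_k = f_k((0,∞))`. -/
theorem stmt19 {A K : Type} [Fintype A] [Fintype K] [DecidableEq A] [Nonempty K]
    (Ak : K → Finset A)
    (ψ : A → ℝ → ℝ)
    (hψc : ∀ a, ContinuousOn (ψ a) (Set.Ici 0))
    (hψm : ∀ a, StrictMonoOn (ψ a) (Set.Ici 0))
    (hψ0 : ∀ a, ψ a 0 = 0)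
    (hψnn : ∀ a, ∀ w : ℝ, 0 ≤ w → 0 ≤ ψ a w)
    (f : K → ℝ → ℝ)
    (hfpos : ∀ k, ∀ q : ℝ, 0 < q → 0 < f k q)
    (hfc : ∀ k, ContinuousOn (f k) (Set.Ioi 0))
    (hfm : ∀ k, StrictAntiOn (f k) (Set.Ioi 0))
    (hflim : ∀ k, Tendsto (f k) atTop (nhds 0))
    (finv : K → ℝ → ℝ)
    (hfinv : ∀ k, ∀ q : ℝ, 0 < q → finv k (f k q) = q)
    (U : K → ℝ → ℝ)
    (hU : ∀ k, ∀ y ∈ f k '' Set.Ioi (0:ℝ), HasDerivAt (U k) (finv k y) y)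
    (xstar : K → ℝ) (hx : ∀ k, xstar k ∈ f k '' Set.Ioi (0:ℝ)) :
    ((∀ k, finv k (xstar k) =
        ∑ a ∈ Ak k, ψ a (∑ s ∈ Finset.univ.filter (fun s => a ∈ Ak s), xstar s)) ↔
      (∀ y : K → ℝ, (∀ k, y k ∈ f k '' Set.Ioi (0:ℝ)) →
        NUMobj Ak ψ U xstar ≤ NUMobj Ak ψ U y)) ∧
    StrictConvexOn ℝ {x : K → ℝ | ∀ k, x k ∈ f k '' Set.Ioi (0:ℝ)}
      (NUMobj Ak ψ U) ∧
    (∀ x₁ x₂ : K → ℝ, (∀ k, x₁ k ∈ f k '' Set.Ioi (0:ℝ)) →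
      (∀ k, x₂ k ∈ f k '' Set.Ioi (0:ℝ)) →
      (∀ y : K → ℝ, (∀ k, y k ∈ f k '' Set.Ioi (0:ℝ)) →
        NUMobj Ak ψ U x₁ ≤ NUMobj Ak ψ U y) →
      (∀ y : K → ℝ, (∀ k, y k ∈ f k '' Set.Ioi (0:ℝ)) →
        NUMobj Ak ψ U x₂ ≤ NUMobj Ak ψ U y) →
      x₁ = x₂) :=
  stmt19_general Ak ψ hψc hψm f hfpos hfc hfm finv hfinv U hU xstar hx
end
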